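/- arXiv:2104.01247 — 7 statements merged into one kernel-verified Lean document; each statement's English description precedes it below -/
import Mathlib

section
/- For h ∈ (-β, β), the derivative of G satisfies the lower bound G'(h) = 2 ∫_0^{1/2} u L'(hu) du ≥ (1/(2h)) ( L(h/2) - L(h/4) ) for h > 0, and hence G'(h) → +∞ as h ↑ β. -/
/-!
Write `Z h = ∑ₖ e^{hk - w|k|}` with `w = β/2`, so that `L = log (Z / Z 0)`. On `(-w, w)` the
function `L` is smooth and even; it is increasing on `[0, w)` because pairing `k` with `-k` turns
the terms into `cosh (hk) e^{-w|k|}`; and it tends to `∞` at `w` because the terms with `k ≥ 0`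
already give `Z h ≥ (1 - e^{h - w})⁻¹`.

For any `f` with these properties, evenness gives `G h = (2/h) ∫₀^{h/2} f`, hence
`G' h = f(h/2)/h - (2/h²) ∫₀^{h/2} f`. Integrating `t f'(t)` by parts turns this into
`2 ∫₀^{1/2} u f'(hu) du`, and bounding `f` on `[0, h/4]` and on `[h/4, h/2]` by its values at the
right endpoints gives `G' h ≥ (f(h/2) - f(h/4)) / (2h)`, which tends to `∞` with `f (h/2)`.
-/

open Set Filter Topology Real MeasureTheory intervalIntegral
open scoped ContDiff

noncomputable def laplaceMoment (w : ℝ) (n : ℕ) (h : ℝ) : ℝ :=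
  ∑' k : ℤ, (k : ℝ) ^ n * exp (h * k - w * |(k : ℝ)|)

noncomputable def laplaceLogMGF (w h : ℝ) : ℝ :=
  log (laplaceMoment w 0 h / laplaceMoment w 0 0)

section laplaceMoment

variable {w h : ℝ}

lemma summable_abs_pow_mul_exp_neg_mul_abs {r : ℝ} (hr : 0 < r) (n : ℕ) :
    Summable fun k : ℤ => |(k : ℝ)| ^ n * exp (-r * |(k : ℝ)|) := by
  have hnat := summable_pow_mul_exp_neg_nat_mul n hr
  refine .of_nat_of_neg ?_ ?_ <;> simpa using hnat

lemma norm_pow_mul_exp_le {b : ℝ} (n : ℕ) (hh : |h| ≤ b) (k : ℤ) :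
    ‖(k : ℝ) ^ n * exp (h * k - w * |(k : ℝ)|)‖
      ≤ |(k : ℝ)| ^ n * exp (-(w - b) * |(k : ℝ)|) := by
  rw [norm_mul, norm_pow, norm_of_nonneg (exp_nonneg _), Real.norm_eq_abs]
  gcongr
  have : h * k ≤ b * |(k : ℝ)| :=
    (le_abs_self _).trans (by rw [abs_mul]; gcongr)
  linarith

lemma summable_laplaceMoment (n : ℕ) (hh : |h| < w) :
    Summable fun k : ℤ => (k : ℝ) ^ n * exp (h * k - w * |(k : ℝ)|) :=
  .of_norm_bounded (summable_abs_pow_mul_exp_neg_mul_abs (sub_pos.2 hh) n)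
    (norm_pow_mul_exp_le n le_rfl)

lemma hasDerivAt_laplaceMoment (n : ℕ) (hh : |h| < w) :
    HasDerivAt (laplaceMoment w n) (laplaceMoment w (n + 1) h) h := by
  set b := (|h| + w) / 2 with hb
  have hhb : h ∈ Ioo (-b) b := abs_lt.1 (by linarith)
  refine hasDerivAt_tsum_of_isPreconnected
    (summable_abs_pow_mul_exp_neg_mul_abs (by linarith : 0 < w - b) (n + 1))
    isOpen_Ioo isPreconnected_Ioo (fun k y _ => ?_)
    (fun k y hy => norm_pow_mul_exp_le (n + 1) (abs_lt.2 hy).le k) hhb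
    (summable_laplaceMoment n hh) hhb
  refine (((hasDerivAt_mul_const (k : ℝ)).sub_const (w * |(k : ℝ)|)).exp.const_mul
    ((k : ℝ) ^ n)).congr_deriv ?_
  ring

lemma contDiffOn_laplaceMoment (n : ℕ) : ContDiffOn ℝ ∞ (laplaceMoment w n) (Ioo (-w) w) := by
  have hd : ∀ n, DifferentiableOn ℝ (laplaceMoment w n) (Ioo (-w) w) := fun n h hh =>
    (hasDerivAt_laplaceMoment n (abs_lt.2 hh)).differentiableAt.differentiableWithinAt
  refine contDiffOn_infty.2 fun m => ?_
  induction m generalizing n with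
  | zero => exact contDiffOn_zero.2 (hd n).continuousOn
  | succ m ih =>
    rw [Nat.cast_succ, contDiffOn_succ_iff_deriv_of_isOpen isOpen_Ioo]
    refine ⟨hd n, by simp, (ih (n + 1)).congr fun h hh => ?_⟩
    exact (hasDerivAt_laplaceMoment n (abs_lt.2 hh)).deriv

lemma laplaceMoment_zero_pos (hh : |h| < w) : 0 < laplaceMoment w 0 h :=
  (summable_laplaceMoment 0 hh).tsum_pos (fun _ => by positivity) 0 (by simp)

lemma laplaceMoment_zero_even : (laplaceMoment w 0).Even := fun h => by
  rw [laplaceMoment, ← (Equiv.neg ℤ).tsum_eq]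
  simp [laplaceMoment]

lemma hasSum_cosh_mul_exp (hh : |h| < w) :
    HasSum (fun k : ℤ => cosh (h * k) * exp (-w * |(k : ℝ)|)) (laplaceMoment w 0 h) := by
  have hs := (summable_laplaceMoment 0 hh).hasSum
  have hsym := (hs.add ((Equiv.neg ℤ).hasSum_iff.2 hs)).div_const 2
  rw [add_self_div_two] at hsym
  refine hsym.congr_fun fun k => ?_
  simp only [Function.comp_apply, Equiv.neg_apply, Int.cast_neg, pow_zero, one_mul, abs_neg,
    cosh_eq, sub_eq_add_neg, exp_add, mul_neg, neg_mul]
  ring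

lemma monotoneOn_laplaceMoment_zero : MonotoneOn (laplaceMoment w 0) (Ico 0 w) := by
  intro a ha b hb hab
  have habs : ∀ x ∈ Ico 0 w, |x| < w := fun x hx =>
    abs_lt.2 ⟨by linarith [hx.1, hx.2], hx.2⟩
  refine hasSum_le (fun k => ?_) (hasSum_cosh_mul_exp (habs a ha))
    (hasSum_cosh_mul_exp (habs b hb))
  gcongr
  rw [cosh_le_cosh, abs_mul, abs_mul, abs_of_nonneg ha.1, abs_of_nonneg hb.1]
  gcongr

lemma inv_one_sub_exp_le_laplaceMoment_zero (hh : |h| < w) :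
    (1 - exp (h - w))⁻¹ ≤ laplaceMoment w 0 h := by
  have hlt : exp (h - w) < 1 := exp_lt_one_iff.2 (by linarith [le_abs_self h])
  rw [← tsum_geometric_of_lt_one (exp_nonneg _) hlt]
  convert tsum_comp_le_tsum_of_inj (summable_laplaceMoment 0 hh) (fun _ => by positivity)
    (Nat.cast_injective (R := ℤ)) using 2 with n
  · ext n
    simp [← exp_nat_mul]
    ring_nf
  · rfl

lemma tendsto_laplaceMoment_zero (hw : 0 < w) :
    Tendsto (laplaceMoment w 0) (𝓝[<] w) atTop := by
  have hlim : Tendsto (fun h => 1 - exp (h - w)) (𝓝[<] w) (𝓝[>] 0) := by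
    refine tendsto_nhdsWithin_of_tendsto_nhds_of_eventually_within _ ?_ ?_
    · exact ((by fun_prop : Continuous fun h => 1 - exp (h - w)).tendsto' w 0
        (by simp)).mono_left nhdsWithin_le_nhds
    · filter_upwards [self_mem_nhdsWithin] with h hh
      simpa using hh
  refine tendsto_atTop_mono' _ ?_ (tendsto_inv_nhdsGT_zero.comp hlim)
  filter_upwards [Ioo_mem_nhdsLT (by linarith : -w < w)] with h hh
  exact inv_one_sub_exp_le_laplaceMoment_zero (abs_lt.2 hh)

end laplaceMoment

section laplaceLogMGF

variable {w : ℝ}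

lemma contDiffOn_laplaceLogMGF : ContDiffOn ℝ ∞ (laplaceLogMGF w) (Ioo (-w) w) := by
  refine ((contDiffOn_laplaceMoment 0).div_const _).log fun h hh => (div_pos ?_ ?_).ne'
  · exact laplaceMoment_zero_pos (abs_lt.2 hh)
  · exact laplaceMoment_zero_pos (by rw [abs_zero]; linarith [hh.1, hh.2])

lemma laplaceLogMGF_even : (laplaceLogMGF w).Even := fun h => by
  rw [laplaceLogMGF, laplaceLogMGF, laplaceMoment_zero_even]

lemma monotoneOn_laplaceLogMGF : MonotoneOn (laplaceLogMGF w) (Ico 0 w) := by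
  intro a ha b hb hab
  have hpos : ∀ x ∈ Ico 0 w, 0 < laplaceMoment w 0 x := fun x hx =>
    laplaceMoment_zero_pos (abs_lt.2 ⟨by linarith [hx.1, hx.2], hx.2⟩)
  have hc := hpos 0 (left_mem_Ico.2 (ha.1.trans_lt ha.2))
  exact log_le_log (div_pos (hpos a ha) hc)
    (div_le_div_of_nonneg_right (monotoneOn_laplaceMoment_zero ha hb hab) hc.le)

lemma tendsto_laplaceLogMGF (hw : 0 < w) : Tendsto (laplaceLogMGF w) (𝓝[<] w) atTop :=
  tendsto_log_atTop.comp <| (tendsto_laplaceMoment_zero hw).atTop_div_const <|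
    laplaceMoment_zero_pos (by rwa [abs_zero])

end laplaceLogMGF

lemma MonotoneOn.intervalIntegral_le_sub_mul {f : ℝ → ℝ} {a b : ℝ}
    (hf : MonotoneOn f (Icc a b)) (hab : a ≤ b) : ∫ x in a..b, f x ≤ (b - a) * f b := by
  have hf' : MonotoneOn f (uIcc a b) := by rwa [uIcc_of_le hab]
  simpa using integral_mono_on hab (hf'.intervalIntegrable (μ := volume))
    intervalIntegrable_const fun x hx => hf hx (right_mem_Icc.2 hab) hx.2

lemma integral_mul_deriv_eq_mul_sub_integral {f : ℝ → ℝ} {w a : ℝ}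
    (hf : ContDiffOn ℝ 1 f (Ioo (-w) w)) (ha : a ∈ Ioo (-w) w) :
    ∫ t in (0 : ℝ)..a, t * deriv f t = a * f a - ∫ t in (0 : ℝ)..a, f t := by
  have hsub : uIcc 0 a ⊆ Ioo (-w) w :=
    ordConnected_Ioo.uIcc_subset ⟨by linarith [ha.1, ha.2], by linarith [ha.1, ha.2]⟩ ha
  have hderiv : ∀ x ∈ uIcc 0 a, HasDerivAt f (deriv f x) x := fun x hx =>
    ((hf.differentiableOn one_ne_zero x (hsub hx)).differentiableAt
      (isOpen_Ioo.mem_nhds (hsub hx))).hasDerivAt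
  simpa using integral_mul_deriv_eq_deriv_mul (fun x _ => hasDerivAt_id x) hderiv
    intervalIntegrable_const
    ((hf.continuousOn_deriv_of_isOpen isOpen_Ioo le_rfl).mono hsub).intervalIntegrable

noncomputable def centeredAverage (f : ℝ → ℝ) (h : ℝ) : ℝ :=
  ∫ x in (0 : ℝ)..1, f (h * (1 / 2 - x))

section centeredAverage

variable {f : ℝ → ℝ} {w h : ℝ}

lemma centeredAverage_eq (heven : f.Even) (hf : ContinuousOn f (Ioo (-w) w)) (h0 : 0 < h)
    (hh : h < 2 * w) : centeredAverage f h = 2 / h * ∫ t in (0 : ℝ)..h / 2, f t := by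
  have hint : ∀ {a b}, a ∈ Ioo (-w) w → b ∈ Ioo (-w) w →
      IntervalIntegrable f volume a b :=
    fun ha hb => (hf.mono (ordConnected_Ioo.uIcc_subset ha hb)).intervalIntegrable
  have hsym : ∫ t in -(h / 2)..0, f t = ∫ t in (0 : ℝ)..h / 2, f t := by
    simpa [heven _] using (integral_comp_neg (a := 0) (b := h / 2) (f := f)).symm
  calc centeredAverage f h = ∫ x in (0 : ℝ)..1, f (h / 2 - h * x) := by
        simp only [centeredAverage, mul_sub, mul_one_div]
    _ = h⁻¹ * ∫ t in -(h / 2)..h / 2, f t := by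
        rw [integral_comp_sub_mul f h0.ne', smul_eq_mul]
        congr 2 <;> ring
    _ = h⁻¹ * ((∫ t in -(h / 2)..0, f t) + ∫ t in (0 : ℝ)..h / 2, f t) := by
        rw [integral_add_adjacent_intervals] <;> apply hint <;> constructor <;> linarith
    _ = 2 / h * ∫ t in (0 : ℝ)..h / 2, f t := by
        rw [hsym]
        ring

lemma hasDerivAt_centeredAverage (heven : f.Even) (hf : ContinuousOn f (Ioo (-w) w))
    (h0 : 0 < h) (hh : h < 2 * w) :
    HasDerivAt (centeredAverage f)
      (f (h / 2) / h - 2 / h ^ 2 * ∫ t in (0 : ℝ)..h / 2, f t) h := by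
  have hmem : h / 2 ∈ Ioo (-w) w := ⟨by linarith, by linarith⟩
  have hF : HasDerivAt (fun y => ∫ t in (0 : ℝ)..y, f t) (f (h / 2)) (h / 2) :=
    integral_hasDerivAt_right
      (hf.mono (ordConnected_Ioo.uIcc_subset ⟨by linarith, by linarith⟩ hmem)).intervalIntegrable
      (hf.stronglyMeasurableAtFilter isOpen_Ioo _ hmem)
      (hf.continuousAt (isOpen_Ioo.mem_nhds hmem))
  have hprod := ((hasDerivAt_inv h0.ne').const_mul 2).mul
    (hF.comp h ((hasDerivAt_id h).div_const 2))
  refine (hprod.congr_of_eventuallyEq ?_).congr_deriv ?_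
  · filter_upwards [Ioo_mem_nhds h0 hh] with x hx
    rw [centeredAverage_eq heven hf hx.1 hx.2, div_eq_mul_inv]
    rfl
  · simp only [Function.comp_apply, id]
    field_simp
    ring

lemma deriv_centeredAverage (hf : ContDiffOn ℝ 1 f (Ioo (-w) w)) (heven : f.Even) (h0 : 0 < h)
    (hh : h < 2 * w) :
    deriv (centeredAverage f) h = 2 * ∫ u in (0 : ℝ)..1 / 2, u * deriv f (h * u) := by
  have hscale : ∫ u in (0 : ℝ)..1 / 2, u * deriv f (h * u)
      = h⁻¹ * (h⁻¹ * ∫ t in (0 : ℝ)..h / 2, t * deriv f t) := by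
    calc ∫ u in (0 : ℝ)..1 / 2, u * deriv f (h * u)
        = h⁻¹ * ∫ u in (0 : ℝ)..1 / 2, h * u * deriv f (h * u) := by
          rw [← intervalIntegral.integral_const_mul]
          congr 1
          ext u
          field_simp
      _ = h⁻¹ * (h⁻¹ * ∫ t in (0 : ℝ)..h / 2, t * deriv f t) := by
          rw [integral_comp_mul_left (fun t => t * deriv f t) h0.ne', smul_eq_mul, mul_zero,
            mul_one_div]
  rw [(hasDerivAt_centeredAverage heven hf.continuousOn h0 hh).deriv, hscale,
    integral_mul_deriv_eq_mul_sub_integral hf ⟨by linarith, by linarith⟩]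
  field_simp

lemma le_deriv_centeredAverage (heven : f.Even) (hf : ContinuousOn f (Ioo (-w) w))
    (hmono : MonotoneOn f (Ico 0 w)) (h0 : 0 < h) (hh : h < 2 * w) :
    1 / (2 * h) * (f (h / 2) - f (h / 4)) ≤ deriv (centeredAverage f) h := by
  have hsub : Icc 0 (h / 2) ⊆ Ico 0 w := Icc_subset_Ico_right (by linarith)
  have hint : ∀ {a b}, a ∈ Icc 0 (h / 2) → b ∈ Icc 0 (h / 2) →
      IntervalIntegrable f volume a b := fun ha hb =>
    ((hmono.mono hsub).mono (ordConnected_Icc.uIcc_subset ha hb)).intervalIntegrable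
  have hsplit : ∫ t in (0 : ℝ)..h / 2, f t ≤ h / 4 * f (h / 4) + h / 4 * f (h / 2) := by
    rw [← integral_add_adjacent_intervals (b := h / 4)
      (hint ⟨le_rfl, by linarith⟩ ⟨by linarith, by linarith⟩)
      (hint ⟨by linarith, by linarith⟩ ⟨by linarith, le_rfl⟩)]
    have hleft := (hmono.mono (hsub.trans' (Icc_subset_Icc_right (by linarith))))
      |>.intervalIntegral_le_sub_mul (by linarith : (0 : ℝ) ≤ h / 4)
    have hright := (hmono.mono (hsub.trans' (Icc_subset_Icc_left (by linarith))))
      |>.intervalIntegral_le_sub_mul (by linarith : h / 4 ≤ h / 2)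
    linarith
  rw [(hasDerivAt_centeredAverage heven hf h0 hh).deriv]
  calc 1 / (2 * h) * (f (h / 2) - f (h / 4))
      = f (h / 2) / h - 2 / h ^ 2 * (h / 4 * f (h / 4) + h / 4 * f (h / 2)) := by
        field_simp
        ring
    _ ≤ f (h / 2) / h - 2 / h ^ 2 * ∫ t in (0 : ℝ)..h / 2, f t := by gcongr

lemma tendsto_deriv_centeredAverage (heven : f.Even) (hf : ContinuousOn f (Ioo (-w) w))
    (hmono : MonotoneOn f (Ico 0 w)) (hw : 0 < w) (htop : Tendsto f (𝓝[<] w) atTop) :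
    Tendsto (deriv (centeredAverage f)) (𝓝[<] (2 * w)) atTop := by
  have hhalf : Tendsto (· / 2) (𝓝[<] (2 * w)) (𝓝[<] w) := by
    refine tendsto_nhdsWithin_of_tendsto_nhds_of_eventually_within _ ?_ ?_
    · exact ((continuous_id.div_const 2).tendsto' _ _ (by simp only [id]; ring)).mono_left
        nhdsWithin_le_nhds
    · filter_upwards [self_mem_nhdsWithin] with h hh
      simp only [mem_Iio] at hh ⊢
      linarith
  have hlow : Tendsto (fun h => 1 / (4 * w) * (f (h / 2) - f (w / 2))) (𝓝[<] (2 * w)) atTop :=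
    (tendsto_atTop_add_const_right _ (-f (w / 2)) (htop.comp hhalf)).const_mul_atTop
      (by positivity)
  refine tendsto_atTop_mono' _ ?_ hlow
  filter_upwards [Ioo_mem_nhdsLT (by linarith : 0 < 2 * w)] with h ⟨h0, hh⟩
  have hquarter : f (h / 4) ≤ f (h / 2) :=
    hmono ⟨by linarith, by linarith⟩ ⟨by linarith, by linarith⟩ (by linarith)
  have hquarter' : f (h / 4) ≤ f (w / 2) :=
    hmono ⟨by linarith, by linarith⟩ ⟨by linarith, by linarith⟩ (by linarith)
  calc 1 / (4 * w) * (f (h / 2) - f (w / 2)) ≤ 1 / (4 * w) * (f (h / 2) - f (h / 4)) := by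
        gcongr
    _ ≤ 1 / (2 * h) * (f (h / 2) - f (h / 4)) :=
        mul_le_mul_of_nonneg_right
          (one_div_le_one_div_of_le (by linarith) (by linarith)) (sub_nonneg.2 hquarter)
    _ ≤ deriv (centeredAverage f) h := le_deriv_centeredAverage heven hf hmono h0 hh

end centeredAverage

/-- For `h ∈ (0, β)`, `G'(h) = 2 ∫_0^{1/2} u L'(hu) du ≥ (1/(2h))(L(h/2) - L(h/4))`,
and consequently `G'(h) → +∞` as `h ↑ β`. -/
theorem derivG_lower_bound (β : ℝ) (hβ : 0 < β)
    (c : ℝ) (hc : c = ∑' k : ℤ, Real.exp (-(β / 2) * |(k : ℝ)|))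
    (L : ℝ → ℝ)
    (hL : ∀ h : ℝ, L h =
      Real.log (∑' k : ℤ, Real.exp (h * k) * Real.exp (-(β / 2) * |(k : ℝ)|) / c))
    (G : ℝ → ℝ)
    (hG : ∀ h : ℝ, G h = ∫ x in (0:ℝ)..1, L (h * (1 / 2 - x))) :
    (∀ h ∈ Ioo (0:ℝ) β,
        (deriv G h = 2 * ∫ u in (0:ℝ)..(1 / 2), u * deriv L (h * u)) ∧
        (1 / (2 * h)) * (L (h / 2) - L (h / 4)) ≤ deriv G h) ∧
    Filter.Tendsto (deriv G) (nhdsWithin β (Iio β)) Filter.atTop := by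
  obtain rfl : L = laplaceLogMGF (β / 2) := funext fun h => by
    rw [hL, hc, laplaceLogMGF, laplaceMoment, laplaceMoment, ← tsum_div_const]
    simp [← exp_add, sub_eq_add_neg]
  obtain rfl : G = centeredAverage (laplaceLogMGF (β / 2)) := funext hG
  have hf := contDiffOn_laplaceLogMGF (w := β / 2)
  have hβ2 : 2 * (β / 2) = β := by ring
  refine ⟨fun h hh => ⟨?_, ?_⟩, ?_⟩
  · exact deriv_centeredAverage (hf.of_le (by simp)) laplaceLogMGF_even hh.1 (hβ2.symm ▸ hh.2)
  · exact le_deriv_centeredAverage laplaceLogMGF_even hf.continuousOn monotoneOn_laplaceLogMGF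
      hh.1 (hβ2.symm ▸ hh.2)
  · simpa [hβ2] using tendsto_deriv_centeredAverage laplaceLogMGF_even hf.continuousOn
      monotoneOn_laplaceLogMGF (by positivity) (tendsto_laplaceLogMGF (by positivity))
end

section
/- Let X be a random walk on ℤ started at 0 with i.i.d. increments of law P_β, and let ρ := inf{i ≥ 1 : X_i ≤ 0}. Then ρ < ∞ almost surely, the pair (ρ, X_1, …, X_{ρ-1}) is independent of X_ρ, and -X_ρ follows a geometric law on {0,1,2,…} with parameter 1 - e^{-β/2}. -/
/-!
The walk is symmetric and not identically zero, so it is almost surely unbounded. The events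
`sup X = ∞` and `inf X = -∞` are tail events which have the same probability by symmetry, so by
Kolmogorov's 0-1 law both have probability one; in particular the walk almost surely enters
`(-∞, 0]`.

On `{ρ = n + 1} ∩ {(X_1, …, X_n) ∈ A}` the path before `ρ` is a function of `U_0, …, U_{n-1}`,
`X_n ≥ 0`, and `X_ρ = X_n + U_n` with `U_n` independent of the past. The left tail of the discrete
Laplace law is memoryless: conditionally on `U_n ≤ -a` with `a ≥ 0`, the overshoot `-a - U_n` is
geometric with parameter `1 - e^{-β/2}`. Hence `-X_ρ` has this geometric law conditionally on each
such event, which gives both the independence and the law of `X_ρ`.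
-/

open MeasureTheory ProbabilityTheory Set Filter
open scoped ENNReal

theorem bddAbove_range_iff_sub_shift (f : ℕ → ℤ) (m : ℕ) :
    BddAbove (range f) ↔ BddAbove (range fun n => f (m + n) - f m) := by
  constructor
  · rintro ⟨C, hC⟩
    exact ⟨C - f m, by rintro _ ⟨n, rfl⟩; linarith [hC ⟨m + n, rfl⟩]⟩
  · rintro ⟨C, hC⟩
    obtain ⟨D, hD⟩ := ((finite_Iio m).image f).bddAbove
    refine ⟨max D (C + f m), ?_⟩
    rintro _ ⟨n, rfl⟩
    rcases lt_or_ge n m with h | h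
    · exact le_max_of_le_left (hD ⟨n, h, rfl⟩)
    · have := hC ⟨n - m, rfl⟩
      simp only [Nat.add_sub_cancel' h] at this
      exact le_max_of_le_right (by linarith)

theorem not_bddBelow_range_iff_neg (f : ℕ → ℤ) :
    ¬BddBelow (range f) ↔ ¬BddAbove (range fun n => -f n) := by
  rw [← bddAbove_neg, ← Set.image_neg_eq_neg, ← range_comp]
  rfl

theorem measurableSet_not_bddAbove_range {Ω : Type*} {m : MeasurableSpace Ω} {g : ℕ → Ω → ℤ}
    (hg : ∀ n, Measurable (g n)) : MeasurableSet {ω | ¬BddAbove (range fun n => g n ω)} := by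
  simp_rw [not_bddAbove_iff, exists_range_iff]
  exact measurableSet_setOfPred.2 (Measurable.forall fun x => Measurable.exists fun n =>
    measurableSet_setOfPred.1 (measurableSet_lt measurable_const (hg n)))

theorem exp_mul_abs_intCast (x : ℝ) (k : ℤ) : Real.exp (x * |(k : ℝ)|) = Real.exp x ^ k.natAbs := by
  rw [← Real.exp_nat_mul, Nat.cast_natAbs, Int.cast_abs, mul_comm]

section

variable {Ω : Type*}

def randomWalk (U : ℕ → Ω → ℤ) (n : ℕ) (ω : Ω) : ℤ := ∑ i ∈ Finset.range n, U i ω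

@[simp]
theorem randomWalk_zero (U : ℕ → Ω → ℤ) (ω : Ω) : randomWalk U 0 ω = 0 := by
  simp [randomWalk]

theorem randomWalk_succ (U : ℕ → Ω → ℤ) (n : ℕ) :
    randomWalk U (n + 1) = randomWalk U n + U n := by
  funext ω
  simp [randomWalk, Finset.sum_range_succ]

theorem randomWalk_add_sub (U : ℕ → Ω → ℤ) (m n : ℕ) (ω : Ω) :
    randomWalk U (m + n) ω - randomWalk U m ω = randomWalk (fun i => U (m + i)) n ω := by
  simp [randomWalk, Finset.sum_range_add]

theorem randomWalk_neg (U : ℕ → Ω → ℤ) (n : ℕ) (ω : Ω) :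
    randomWalk (fun i ω => -U i ω) n ω = -randomWalk U n ω := by
  simp [randomWalk]

theorem measurable_randomWalk {m : MeasurableSpace Ω} {U : ℕ → Ω → ℤ} {n : ℕ}
    (hU : ∀ i < n, Measurable[m] (U i)) : Measurable[m] (randomWalk U n) :=
  Finset.measurable_sum _ fun i hi => hU i (Finset.mem_range.1 hi)

theorem measurable_truncatedPath {m : MeasurableSpace Ω} {X : ℕ → Ω → ℤ} {r : ℕ}
    (hX : ∀ i < r, Measurable[m] (X i)) :
    Measurable[m] fun ω => (r, fun i => if i < r then X i ω else 0) := by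
  refine measurable_const.prodMk (measurable_pi_lambda _ fun i => ?_)
  by_cases hi : i < r
  · simpa only [hi, if_true] using hX i hi
  · simpa only [hi, if_false] using measurable_const

theorem measurableSet_limsup_not_bddAbove_randomWalk {U : ℕ → Ω → ℤ} :
    MeasurableSet[limsup (fun i => MeasurableSpace.comap (U i) inferInstance) atTop]
      {ω | ¬BddAbove (range fun n => randomWalk U n ω)} := by
  rw [limsup_eq_iInf_iSup_of_nat, MeasurableSpace.measurableSet_iInf]
  intro m
  have hshift : {ω | ¬BddAbove (range fun n => randomWalk U n ω)} =
      {ω | ¬BddAbove (range fun n => randomWalk (fun i => U (m + i)) n ω)} := by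
    ext ω
    rw [mem_ofPred_eq, mem_ofPred_eq, bddAbove_range_iff_sub_shift _ m]
    simp only [randomWalk_add_sub]
  rw [hshift]
  exact measurableSet_not_bddAbove_range fun n => measurable_randomWalk fun i _ =>
    (comap_measurable (U (m + i))).mono
      (le_iSup₂ (f := fun i (_ : i ≥ m) => MeasurableSpace.comap (U i) inferInstance) (m + i)
        (Nat.le_add_right m i)) le_rfl

theorem measurable_randomWalk_iSup_comap_lt {U : ℕ → Ω → ℤ} {j n : ℕ} (hjn : j ≤ n) :
    Measurable[⨆ i ∈ Iio n, MeasurableSpace.comap (U i) inferInstance] (randomWalk U j) :=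
  measurable_randomWalk fun i hi => (comap_measurable (U i)).mono
    (le_iSup₂ (f := fun i (_ : i ∈ Iio n) => MeasurableSpace.comap (U i) inferInstance) i
      (hi.trans_le hjn)) le_rfl

noncomputable def ladderEpoch (X : ℕ → Ω → ℤ) (ω : Ω) : ℕ := sInf {i | 1 ≤ i ∧ X i ω ≤ 0}

noncomputable def ladderHeight (X : ℕ → Ω → ℤ) (ω : Ω) : ℤ := X (ladderEpoch X ω) ω

noncomputable def preLadderPath (X : ℕ → Ω → ℤ) (ω : Ω) : ℕ × (ℕ → ℤ) :=
  (ladderEpoch X ω, fun i => if i < ladderEpoch X ω then X i ω else 0)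

section LadderEpoch

variable {X : ℕ → Ω → ℤ} {ω : Ω}

theorem ladderEpoch_eq_zero_iff : ladderEpoch X ω = 0 ↔ ¬∃ i, 1 ≤ i ∧ X i ω ≤ 0 := by
  simp [ladderEpoch, Nat.sInf_eq_zero, eq_empty_iff_forall_notMem]

theorem ladderEpoch_eq_succ_iff {n : ℕ} :
    ladderEpoch X ω = n + 1 ↔ (∀ i : Fin n, 0 < X (i + 1) ω) ∧ X (n + 1) ω ≤ 0 := by
  constructor
  · intro h
    have hmem := Nat.sInf_mem (Nat.nonempty_of_pos_sInf (by rw [← ladderEpoch, h]; omega))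
    rw [← ladderEpoch, h] at hmem
    refine ⟨fun i => ?_, hmem.2⟩
    have := Nat.notMem_of_lt_sInf (s := {i | 1 ≤ i ∧ X i ω ≤ 0}) (m := i + 1)
      (by rw [← ladderEpoch, h]; omega)
    simp only [mem_ofPred_eq, not_and, not_le] at this
    exact this (by omega)
  · rintro ⟨hpos, hle⟩
    refine IsLeast.csInf_eq ⟨⟨by omega, hle⟩, fun j ⟨hj, hjle⟩ => ?_⟩
    by_contra hlt
    obtain ⟨i, rfl⟩ : ∃ i, j = i + 1 := ⟨j - 1, by omega⟩
    exact (hpos ⟨i, by omega⟩).not_ge hjle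

theorem ladderHeight_nonpos (h0 : X 0 ω = 0) : ladderHeight X ω ≤ 0 := by
  by_cases h : ∃ i, 1 ≤ i ∧ X i ω ≤ 0
  · exact (Nat.sInf_mem h).2
  · rw [ladderHeight, ladderEpoch_eq_zero_iff.2 h, h0]

theorem preimage_inter_ladderEpoch_eq_succ (S : Set (ℕ × (ℕ → ℤ))) (T : Set ℤ) (n : ℕ) :
    preLadderPath X ⁻¹' S ∩ ladderHeight X ⁻¹' T ∩ ladderEpoch X ⁻¹' {n + 1} =
      (fun ω => (n + 1, fun i => if i < n + 1 then X i ω else 0)) ⁻¹' S ∩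
        (⋂ i : Fin n, X (i + 1) ⁻¹' Ioi 0) ∩ X (n + 1) ⁻¹' (T ∩ Iic 0) := by
  ext ω
  simp only [mem_inter_iff, mem_preimage, mem_singleton_iff, mem_iInter, mem_Ioi, mem_Iic]
  constructor
  · rintro ⟨⟨hS, hT⟩, hρ⟩
    obtain ⟨hpos, hle⟩ := ladderEpoch_eq_succ_iff.1 hρ
    simp only [preLadderPath, ladderHeight, hρ] at hS hT
    exact ⟨⟨hS, hpos⟩, hT, hle⟩
  · rintro ⟨⟨hS, hpos⟩, hT, hle⟩
    have hρ := ladderEpoch_eq_succ_iff.2 ⟨hpos, hle⟩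
    exact ⟨⟨by simpa [preLadderPath, hρ] using hS, by simpa [ladderHeight, hρ] using hT⟩, hρ⟩

end LadderEpoch

variable [mΩ : MeasurableSpace Ω] {μ : Measure Ω}

theorem measurable_ladderEpoch {X : ℕ → Ω → ℤ} (hX : ∀ n, Measurable (X n)) :
    Measurable (ladderEpoch X) := by
  have hle : ∀ i, Measurable fun ω => X i ω ≤ 0 :=
    fun i => measurableSet_setOfPred.1 (measurableSet_le (hX i) measurable_const)
  refine measurable_to_countable' fun n => ?_
  cases n with
  | zero =>
    have : ladderEpoch X ⁻¹' {0} = {ω | ¬∃ i, 1 ≤ i ∧ X i ω ≤ 0} := by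
      ext; exact ladderEpoch_eq_zero_iff
    rw [this]
    exact measurableSet_setOfPred.2 (Measurable.not (Measurable.exists fun i =>
      measurable_const.and (hle i)))
  | succ n =>
    have : ladderEpoch X ⁻¹' {n + 1} = {ω | (∀ i : Fin n, 0 < X (i + 1) ω) ∧ X (n + 1) ω ≤ 0} := by
      ext; exact ladderEpoch_eq_succ_iff
    rw [this]
    exact measurableSet_setOfPred.2 ((Measurable.forall fun i => measurableSet_setOfPred.1
      (measurableSet_lt measurable_const (hX _))).and (hle _))

theorem measurable_ladderHeight {X : ℕ → Ω → ℤ} (hX : ∀ n, Measurable (X n)) :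
    Measurable (ladderHeight X) :=
  (measurable_from_prod_countable_right (f := fun p : ℕ × Ω => X p.1 p.2) hX).comp
    ((measurable_ladderEpoch hX).prodMk measurable_id)

theorem measure_eq_tsum_inter_preimage_succ {f : Ω → ℕ} (hf : Measurable f)
    (h0 : μ (f ⁻¹' {0}) = 0) (A : Set Ω) : μ A = ∑' n, μ (A ∩ f ⁻¹' {n + 1}) := by
  have hsum : ∑' n, μ.restrict A (f ⁻¹' {n}) = μ A := by
    have := tsum_measure_preimage_singleton (μ := μ.restrict A) countable_univ
      fun n _ => hf (measurableSet_singleton n)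
    rwa [preimage_univ, Measure.restrict_apply_univ,
      tsum_univ fun n => μ.restrict A (f ⁻¹' {n})] at this
  rw [← hsum, tsum_eq_zero_add' ENNReal.summable,
    Measure.restrict_apply (hf (measurableSet_singleton 0)),
    measure_mono_null inter_subset_left h0, zero_add]
  exact tsum_congr fun n => by
    rw [Measure.restrict_apply (hf (measurableSet_singleton _)), inter_comm]

theorem indepFun_of_measure_inter_preimage_singleton {β γ : Type*} [MeasurableSpace β]
    [MeasurableSpace γ] [Countable γ] [MeasurableSingletonClass γ] {V : Ω → β} {W : Ω → γ}
    (hW : Measurable W)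
    (h : ∀ s, MeasurableSet s → ∀ c, μ (V ⁻¹' s ∩ W ⁻¹' {c}) = μ (V ⁻¹' s) * μ (W ⁻¹' {c})) :
    IndepFun V W μ := by
  have hsum : ∀ (A : Set Ω) (t : Set γ), μ (W ⁻¹' t ∩ A) = ∑' c : t, μ (W ⁻¹' {(c : γ)} ∩ A) :=
    fun A t => by
      simp_rw [← Measure.restrict_apply (hW (measurableSet_singleton _)),
        ← Measure.restrict_apply (hW t.to_countable.measurableSet)]
      exact (tsum_measure_preimage_singleton t.to_countable
        fun c _ => hW (measurableSet_singleton c)).symm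
  rw [indepFun_iff_measure_inter_preimage_eq_mul]
  intro s t hs _
  rw [inter_comm, hsum, ← inter_univ (W ⁻¹' t), hsum, ← ENNReal.tsum_mul_left]
  simp_rw [inter_univ]
  exact tsum_congr fun c => by rw [inter_comm, h s hs c]

theorem measure_inter_preimage_add_eq_tsum {V : Ω → ℤ} (hV : Measurable V)
    {m : MeasurableSpace Ω} (hm : m ≤ mΩ) {E : Set Ω} {Y : Ω → ℤ} (hE : MeasurableSet[m] E)
    (hY : Measurable[m] Y) (hind : Indep m (MeasurableSpace.comap V inferInstance) μ)
    (hY0 : ∀ ω ∈ E, 0 ≤ Y ω) (T : Set ℤ) :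
    μ (E ∩ (Y + V) ⁻¹' T) =
      ∑' a : ℕ, μ (E ∩ Y ⁻¹' {(a : ℤ)}) * μ (V ⁻¹' ((fun x => (a : ℤ) + x) ⁻¹' T)) := by
  have hEa : ∀ a : ℕ, MeasurableSet[m] (E ∩ Y ⁻¹' {(a : ℤ)}) :=
    fun a => hE.inter (hY (measurableSet_singleton _))
  have hunion : E ∩ (Y + V) ⁻¹' T =
      ⋃ a : ℕ, (E ∩ Y ⁻¹' {(a : ℤ)}) ∩ V ⁻¹' ((fun x => (a : ℤ) + x) ⁻¹' T) := by
    ext ω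
    simp only [mem_inter_iff, mem_preimage, mem_iUnion, mem_singleton_iff, Pi.add_apply]
    constructor
    · rintro ⟨hω, h⟩
      have hY_eq := Int.toNat_of_nonneg (hY0 ω hω)
      exact ⟨(Y ω).toNat, ⟨hω, hY_eq.symm⟩, by rwa [hY_eq]⟩
    · rintro ⟨a, ⟨hω, ha⟩, h⟩
      exact ⟨hω, ha ▸ h⟩
  rw [hunion, measure_iUnion]
  · exact tsum_congr fun a => (Indep_iff _ _ μ).1 hind _ _ (hEa a) ⟨_, .of_discrete, rfl⟩
  · intro a a' haa'
    exact ((disjoint_singleton.2 (by exact_mod_cast haa')).preimage Y).mono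
      (inter_subset_left.trans inter_subset_right) (inter_subset_left.trans inter_subset_right)
  · exact fun a => (hm _ (hEa a)).inter (hV .of_discrete)

theorem measure_inter_add_eq_mul_of_memoryless {V : Ω → ℤ} (hV : Measurable V)
    {m : MeasurableSpace Ω} (hm : m ≤ mΩ) {E : Set Ω} {Y : Ω → ℤ} (hE : MeasurableSet[m] E)
    (hY : Measurable[m] Y) (hind : Indep m (MeasurableSpace.comap V inferInstance) μ)
    (hY0 : ∀ ω ∈ E, 0 ≤ Y ω) {g : ℕ → ℝ≥0∞}
    (hmemo : ∀ a k : ℕ, μ (V ⁻¹' {-(a : ℤ) - k}) = μ (V ⁻¹' Iic (-(a : ℤ))) * g k) (k : ℕ) :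
    μ (E ∩ (Y + V) ⁻¹' {-(k : ℤ)}) = μ (E ∩ (Y + V) ⁻¹' Iic 0) * g k := by
  have hk : ∀ a : ℕ, (fun x => (a : ℤ) + x) ⁻¹' {-(k : ℤ)} = {-(a : ℤ) - k} := fun a => by
    ext
    simp only [mem_preimage, mem_singleton_iff]
    omega
  have h0 : ∀ a : ℕ, (fun x => (a : ℤ) + x) ⁻¹' Iic 0 = Iic (-(a : ℤ)) := fun a => by
    ext
    simp only [mem_preimage, mem_Iic]
    omega
  -- `m` is a local instance too, so the ambient σ-algebra has to be given by name.
  have hsum := measure_inter_preimage_add_eq_tsum (mΩ := mΩ) hV hm hE hY hind hY0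
  rw [hsum, hsum, ← ENNReal.tsum_mul_right]
  simp_rw [hk, h0, hmemo, mul_assoc]

theorem measure_preimage_eq_mul_geometric_of_laplace {V : Ω → ℤ} (hV : Measurable V) {q c : ℝ}
    (hq0 : 0 ≤ q) (hq1 : q < 1) (hc : 0 < c)
    (hlaw : ∀ a, μ (V ⁻¹' {a}) = ENNReal.ofReal (q ^ a.natAbs / c)) (a k : ℕ) :
    μ (V ⁻¹' {-(a : ℤ) - k}) = μ (V ⁻¹' Iic (-(a : ℤ))) * ENNReal.ofReal ((1 - q) * q ^ k) := by
  have hnatAbs : ∀ j : ℕ, (-(a : ℤ) - j).natAbs = a + j := fun j => by omega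
  have hIic : V ⁻¹' Iic (-(a : ℤ)) = ⋃ j : ℕ, V ⁻¹' {-(a : ℤ) - j} := by
    ext ω
    simp only [mem_preimage, mem_Iic, mem_iUnion, mem_singleton_iff]
    exact ⟨fun h => ⟨(-a - V ω).toNat, by omega⟩, fun ⟨j, hj⟩ => by omega⟩
  have hterm : ∀ j : ℕ, q ^ (a + j) / c = q ^ a / c * q ^ j := fun j => by rw [pow_add]; ring
  rw [hIic, measure_iUnion (fun j j' hjj' => (disjoint_singleton.2 (by omega)).preimage V)
      fun j => hV (measurableSet_singleton _)]
  simp_rw [hlaw, hnatAbs, hterm]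
  rw [← ENNReal.ofReal_tsum_of_nonneg (fun j => by positivity)
      ((summable_geometric_of_lt_one hq0 hq1).mul_left _), tsum_mul_left,
    tsum_geometric_of_lt_one hq0 hq1, ← ENNReal.ofReal_mul (by have := hq1; positivity)]
  congr 1
  field_simp [(sub_pos.2 hq1).ne']

theorem pos_of_measure_preimage_singleton_eq_ofReal_div [IsProbabilityMeasure μ] {V : Ω → ℤ}
    {r : ℤ → ℝ} {c : ℝ} (hr : ∀ a, 0 ≤ r a)
    (hlaw : ∀ a, μ (V ⁻¹' {a}) = ENNReal.ofReal (r a / c)) : 0 < c := by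
  by_contra! hc
  have : μ univ = 0 := by
    rw [← preimage_univ (f := V), ← iUnion_of_singleton, preimage_iUnion]
    exact measure_iUnion_null fun a => by
      rw [hlaw, ENNReal.ofReal_eq_zero]
      exact div_nonpos_of_nonneg_of_nonpos (hr a) hc
  simp at this

theorem iIndepSet_biInter_preimage {ι κ β : Type*} [DecidableEq ι]
    [MeasurableSpace β] {U : ι → Ω → β} (hmeas : ∀ i, Measurable (U i)) (hindep : iIndepFun U μ)
    {B : κ → Finset ι} (hB : Pairwise (Function.onFun Disjoint B)) {A : ι → Set β}
    (hA : ∀ i, MeasurableSet (A i)) :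
    iIndepSet (fun j => ⋂ i ∈ B j, U i ⁻¹' A i) μ := by
  have hprod : ∀ s : Finset ι, μ (⋂ i ∈ s, U i ⁻¹' A i) = ∏ i ∈ s, μ (U i ⁻¹' A i) :=
    fun s => hindep.meas_biInter fun i _ => ⟨A i, hA i, rfl⟩
  refine (iIndepSet_iff_meas_biInter fun j =>
    Finset.measurableSet_biInter _ fun i _ => hmeas i (hA i)).2 fun s => ?_
  rw [← Finset.set_biInter_biUnion, hprod, Finset.prod_biUnion (hB.set_pairwise s)]
  exact Finset.prod_congr rfl fun j _ => (hprod _).symm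

section RandomWalk

variable {U : ℕ → Ω → ℤ}

theorem measure_forall_abs_randomWalk_le_eq_zero (hmeas : ∀ i, Measurable (U i))
    (hindep : iIndepFun U μ) {p : ℤ → ℝ≥0∞} (hlaw : ∀ i a, μ (U i ⁻¹' {a}) = p a) {k : ℤ}
    (hk : 0 < k) (hpk : p k ≠ 0) (M : ℕ) :
    μ {ω | ∀ n, |randomWalk U n ω| ≤ M} = 0 := by
  -- The blocks of `2M + 1` consecutive increments all equal to `k` are independent events of
  -- equal positive probability, so one of them occurs (Borel–Cantelli), and across such a block
  -- the walk moves by more than `2M`.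
  have := hindep.isProbabilityMeasure
  set L := 2 * M + 1
  let block : ℕ → Finset ℕ := fun j => Finset.Ico (j * L) (j * L + L)
  let E : ℕ → Set Ω := fun j => ⋂ i ∈ block j, U i ⁻¹' {k}
  have hEm : ∀ j, MeasurableSet (E j) := fun j =>
    Finset.measurableSet_biInter _ fun i _ => hmeas i (measurableSet_singleton k)
  have hdisj : Pairwise (Function.onFun Disjoint block) := by
    intro j j' hjj'
    refine Finset.disjoint_left.2 fun i hi hi' => hjj' ?_
    simp only [block, Finset.mem_Ico] at hi hi'
    rw [← Nat.div_eq_of_lt_le hi.1 (by linarith [hi.2]),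
      ← Nat.div_eq_of_lt_le hi'.1 (by linarith [hi'.2])]
  have hsum : ∑' j, μ (E j) = ∞ := by
    simp_rw [E, hindep.meas_biInter fun i _ => ⟨{k}, measurableSet_singleton k, rfl⟩, hlaw, block,
      Finset.prod_const, Nat.card_Ico, Nat.add_sub_cancel_left]
    exact ENNReal.tsum_const_eq_top_of_ne_zero (pow_ne_zero _ hpk)
  have hlimsup := measure_limsup_eq_one hEm
    (iIndepSet_biInter_preimage hmeas hindep hdisj fun _ => measurableSet_singleton k) hsum
  refine measure_mono_null (show _ ⊆ (limsup E atTop)ᶜ from fun ω hω hlim => ?_)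
    ((prob_compl_eq_zero_iff (MeasurableSet.measurableSet_limsup hEm)).2 hlimsup)
  obtain ⟨j, hj⟩ := (Filter.mem_limsup_iff_frequently_mem.1 hlim).exists
  have hrise : randomWalk U (j * L + L) ω - randomWalk U (j * L) ω = L * k := by
    have hval : ∀ i ∈ Finset.range L, U (j * L + i) ω = k := fun i hi =>
      mem_iInter₂.1 hj (j * L + i) (Finset.mem_Ico.2 ⟨by omega, by simpa using hi⟩)
    rw [randomWalk_add_sub, randomWalk, Finset.sum_congr rfl hval]
    simp
  have h1 := abs_le.1 (hω (j * L + L))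
  have h2 := abs_le.1 (hω (j * L))
  have : (L : ℤ) ≤ L * k := le_mul_of_one_le_right (by positivity) hk
  push_cast [L] at *
  omega

theorem map_neg_increments_eq (hmeas : ∀ i, Measurable (U i)) (hindep : iIndepFun U μ)
    {p : ℤ → ℝ≥0∞} (hlaw : ∀ i a, μ (U i ⁻¹' {a}) = p a) (hsymm : ∀ a, p (-a) = p a) :
    μ.map (fun ω i => -U i ω) = μ.map (fun ω i => U i ω) := by
  have hneg : iIndepFun (fun i ω => -U i ω) μ :=
    hindep.comp (fun _ => Neg.neg) (fun _ => measurable_neg)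
  rw [hneg.map_fun_eq_infinitePi_map (fun i => by fun_prop),
    hindep.map_fun_eq_infinitePi_map hmeas]
  congr 1
  funext i
  refine Measure.ext_of_singleton fun a => ?_
  rw [Measure.map_apply (by fun_prop) (measurableSet_singleton a),
    Measure.map_apply (hmeas i) (measurableSet_singleton a)]
  have : (fun ω => -U i ω) ⁻¹' {a} = U i ⁻¹' {-a} := by ext; simp [neg_eq_iff_eq_neg]
  rw [this, hlaw, hlaw, hsymm]

theorem measure_not_bddAbove_eq_not_bddBelow (hmeas : ∀ i, Measurable (U i))
    (hindep : iIndepFun U μ) {p : ℤ → ℝ≥0∞} (hlaw : ∀ i a, μ (U i ⁻¹' {a}) = p a)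
    (hsymm : ∀ a, p (-a) = p a) :
    μ {ω | ¬BddAbove (range fun n => randomWalk U n ω)} =
      μ {ω | ¬BddBelow (range fun n => randomWalk U n ω)} := by
  let S : Set (ℕ → ℤ) := {u | ¬BddAbove (range fun n => ∑ i ∈ Finset.range n, u i)}
  have hS : MeasurableSet S := measurableSet_not_bddAbove_range fun n =>
    Finset.measurable_sum _ fun i _ => measurable_pi_apply i
  have hB : {ω | ¬BddBelow (range fun n => randomWalk U n ω)} = (fun ω i => -U i ω) ⁻¹' S := by
    ext ω
    simp only [mem_ofPred_eq, mem_preimage, not_bddBelow_range_iff_neg, S, ← randomWalk_neg]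
    rfl
  rw [hB, ← Measure.map_apply (by fun_prop) hS, map_neg_increments_eq hmeas hindep hlaw hsymm,
    Measure.map_apply (by fun_prop) hS]
  rfl

theorem ae_not_bddBelow_range_randomWalk (hmeas : ∀ i, Measurable (U i))
    (hindep : iIndepFun U μ) {p : ℤ → ℝ≥0∞} (hlaw : ∀ i a, μ (U i ⁻¹' {a}) = p a)
    (hsymm : ∀ a, p (-a) = p a) {k : ℤ} (hk : 0 < k) (hpk : p k ≠ 0) :
    ∀ᵐ ω ∂μ, ¬BddBelow (range fun n => randomWalk U n ω) := by
  have := hindep.isProbabilityMeasure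
  set A := {ω | ¬BddAbove (range fun n => randomWalk U n ω)}
  set B := {ω | ¬BddBelow (range fun n => randomWalk U n ω)}
  have hBm : MeasurableSet B := by
    simp only [B, not_bddBelow_range_iff_neg, ← randomWalk_neg]
    exact measurableSet_not_bddAbove_range fun n =>
      measurable_randomWalk fun i _ => (hmeas i).neg
  have hAB : μ (A ∪ B)ᶜ = 0 := by
    refine measure_mono_null (fun ω hω => ?_) (measure_iUnion_null fun M =>
      measure_forall_abs_randomWalk_le_eq_zero hmeas hindep hlaw hk hpk M)
    simp only [A, B, mem_compl_iff, mem_union, not_or, not_not, mem_ofPred_eq] at hω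
    obtain ⟨⟨a, ha⟩, ⟨b, hb⟩⟩ := hω
    refine mem_iUnion.2 ⟨(max a (-b)).toNat, fun n => ?_⟩
    have han : randomWalk U n ω ≤ a := ha ⟨n, rfl⟩
    have hbn : b ≤ randomWalk U n ω := hb ⟨n, rfl⟩
    rw [abs_le]
    omega
  have hsymmAB := measure_not_bddAbove_eq_not_bddBelow hmeas hindep hlaw hsymm
  rcases measure_zero_or_one_of_measurableSet_limsup_atTop (fun i => (hmeas i).comap_le)
    hindep.iIndep measurableSet_limsup_not_bddAbove_randomWalk with hA | hA
  · have : μ (A ∪ B) = 0 := measure_union_null hA (hsymmAB ▸ hA)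
    have huniv := measure_union_null this hAB
    rw [union_compl_self, measure_univ] at huniv
    exact absurd huniv one_ne_zero
  · rw [ae_iff]
    exact (prob_compl_eq_zero_iff hBm).2 (hsymmAB ▸ hA)

theorem indep_iSup_comap_lt (hmeas : ∀ i, Measurable (U i)) (hindep : iIndepFun U μ) (n : ℕ) :
    Indep (⨆ i ∈ Iio n, MeasurableSpace.comap (U i) inferInstance)
      (MeasurableSpace.comap (U n) inferInstance) μ :=
  indep_of_indep_of_le_right
    (indep_iSup_of_disjoint (fun i => (hmeas i).comap_le) hindep.iIndep (S := Iio n) (T := {n})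
      (disjoint_singleton_right.2 (lt_irrefl n)))
    (le_iSup₂ (f := fun i (_ : i ∈ ({n} : Set ℕ)) => MeasurableSpace.comap (U i) inferInstance)
      n rfl)

theorem measure_preLadderPath_inter_ladderHeight_eq_mul (hmeas : ∀ i, Measurable (U i))
    (hindep : iIndepFun U μ) (hrec : ∀ᵐ ω ∂μ, ∃ i, 1 ≤ i ∧ randomWalk U i ω ≤ 0)
    {g : ℕ → ℝ≥0∞}
    (hmemo : ∀ n a k : ℕ, μ (U n ⁻¹' {-(a : ℤ) - k}) = μ (U n ⁻¹' Iic (-(a : ℤ))) * g k)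
    {S : Set (ℕ × (ℕ → ℤ))} (hS : MeasurableSet S) (k : ℕ) :
    μ (preLadderPath (randomWalk U) ⁻¹' S ∩ ladderHeight (randomWalk U) ⁻¹' {-(k : ℤ)}) =
      μ (preLadderPath (randomWalk U) ⁻¹' S) * g k := by
  have hρ := measurable_ladderEpoch (X := randomWalk U) fun n =>
    measurable_randomWalk fun i _ => hmeas i
  have h0 : μ (ladderEpoch (randomWalk U) ⁻¹' {0}) = 0 := by
    rw [ae_iff] at hrec
    convert hrec using 2
    ext ω
    exact ladderEpoch_eq_zero_iff
  rw [measure_eq_tsum_inter_preimage_succ hρ h0, measure_eq_tsum_inter_preimage_succ hρ h0,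
    ← ENNReal.tsum_mul_right]
  refine tsum_congr fun n => ?_
  let E := (fun ω => (n + 1, fun i => if i < n + 1 then randomWalk U i ω else 0)) ⁻¹' S ∩
    ⋂ i : Fin n, randomWalk U (i + 1) ⁻¹' Ioi 0
  have hE : MeasurableSet[⨆ i ∈ Iio n, MeasurableSpace.comap (U i) inferInstance] E :=
    (measurable_truncatedPath (fun i hi =>
      measurable_randomWalk_iSup_comap_lt (Nat.lt_succ_iff.1 hi)) hS).inter
        (MeasurableSet.iInter fun i => measurable_randomWalk_iSup_comap_lt i.isLt measurableSet_Ioi)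
  have hE0 : ∀ ω ∈ E, 0 ≤ randomWalk U n ω := by
    intro ω hω
    cases n with
    | zero => simp
    | succ n => exact (mem_iInter.1 hω.2 ⟨n, n.lt_succ_self⟩).le
  have key := measure_inter_add_eq_mul_of_memoryless (hmeas n)
    (iSup₂_le fun i _ => (hmeas i).comap_le) hE (measurable_randomWalk_iSup_comap_lt le_rfl)
    (indep_iSup_comap_lt hmeas hindep n) hE0 (hmemo n) k
  have hk := preimage_inter_ladderEpoch_eq_succ (X := randomWalk U) S {-(k : ℤ)} n
  have huniv := preimage_inter_ladderEpoch_eq_succ (X := randomWalk U) S univ n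
  rw [inter_eq_left.2 (singleton_subset_iff.2 (by simp))] at hk
  rw [preimage_univ, inter_univ, univ_inter] at huniv
  rw [hk, huniv, randomWalk_succ, key]

theorem measure_ladderHeight_preimage_neg (hmeas : ∀ i, Measurable (U i))
    (hindep : iIndepFun U μ) (hrec : ∀ᵐ ω ∂μ, ∃ i, 1 ≤ i ∧ randomWalk U i ω ≤ 0)
    {g : ℕ → ℝ≥0∞}
    (hmemo : ∀ n a k : ℕ, μ (U n ⁻¹' {-(a : ℤ) - k}) = μ (U n ⁻¹' Iic (-(a : ℤ))) * g k)
    (k : ℕ) : μ (ladderHeight (randomWalk U) ⁻¹' {-(k : ℤ)}) = g k := by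
  have := hindep.isProbabilityMeasure
  simpa using measure_preLadderPath_inter_ladderHeight_eq_mul hmeas hindep hrec hmemo
    MeasurableSet.univ k

theorem indepFun_preLadderPath_ladderHeight (hmeas : ∀ i, Measurable (U i))
    (hindep : iIndepFun U μ) (hrec : ∀ᵐ ω ∂μ, ∃ i, 1 ≤ i ∧ randomWalk U i ω ≤ 0)
    {g : ℕ → ℝ≥0∞}
    (hmemo : ∀ n a k : ℕ, μ (U n ⁻¹' {-(a : ℤ) - k}) = μ (U n ⁻¹' Iic (-(a : ℤ))) * g k) :
    IndepFun (preLadderPath (randomWalk U)) (ladderHeight (randomWalk U)) μ := by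
  refine indepFun_of_measure_inter_preimage_singleton
    (measurable_ladderHeight fun n => measurable_randomWalk fun i _ => hmeas i) fun s hs w => ?_
  rcases le_or_gt w 0 with hw | hw
  · obtain ⟨k, rfl⟩ : ∃ k : ℕ, w = -k := ⟨(-w).toNat, by omega⟩
    rw [measure_preLadderPath_inter_ladderHeight_eq_mul hmeas hindep hrec hmemo hs,
      measure_ladderHeight_preimage_neg hmeas hindep hrec hmemo]
  · have : ladderHeight (randomWalk U) ⁻¹' {w} = ∅ :=
      eq_empty_of_forall_notMem fun ω hω =>
        (ladderHeight_nonpos (randomWalk_zero U ω)).not_gt (hω.symm ▸ hw)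
    simp [this]

end RandomWalk

end

theorem ladder_epoch_geometric_general (β : ℝ) (hβ : 0 < β)
    (c : ℝ)
    {Ω : Type*} [MeasurableSpace Ω] (μ : Measure Ω) [IsProbabilityMeasure μ]
    (U : ℕ → Ω → ℤ) (hmeas : ∀ i, Measurable (U i))
    (hindep : iIndepFun U μ)
    (hlaw : ∀ i : ℕ, ∀ k : ℤ,
      μ {ω | U i ω = k} = ENNReal.ofReal (Real.exp (-(β / 2) * |(k : ℝ)|) / c))
    (X : ℕ → Ω → ℤ) (hX : ∀ n ω, X n ω = ∑ i ∈ Finset.range n, U i ω)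
    (ρ : Ω → ℕ) (hρ : ∀ ω, ρ ω = sInf {i : ℕ | 1 ≤ i ∧ X i ω ≤ 0}) :
    (∀ᵐ ω ∂μ, ∃ i : ℕ, 1 ≤ i ∧ X i ω ≤ 0) ∧
    IndepFun (fun ω => (ρ ω, fun i : ℕ => if i < ρ ω then X i ω else 0))
      (fun ω => X (ρ ω) ω) μ ∧
    (∀ k : ℕ, μ {ω | X (ρ ω) ω = -(k : ℤ)} =
      ENNReal.ofReal ((1 - Real.exp (-β / 2)) * Real.exp (-β / 2) ^ k)) := by
  set q := Real.exp (-(β / 2))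
  have hq1 : q < 1 := Real.exp_lt_one_iff.2 (by linarith)
  have hlawq : ∀ i a, μ (U i ⁻¹' {a}) = ENNReal.ofReal (q ^ a.natAbs / c) := fun i a => by
    rw [← exp_mul_abs_intCast]
    exact hlaw i a
  have hc : 0 < c := pos_of_measure_preimage_singleton_eq_ofReal_div (fun a => by positivity)
    (hlawq 0)
  obtain rfl : X = randomWalk U := funext fun n => funext (hX n)
  obtain rfl : ρ = ladderEpoch (randomWalk U) := funext hρ
  have hrec : ∀ᵐ ω ∂μ, ∃ i, 1 ≤ i ∧ randomWalk U i ω ≤ 0 := by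
    filter_upwards [ae_not_bddBelow_range_randomWalk hmeas hindep hlawq
      (fun a => by rw [Int.natAbs_neg]) one_pos (ENNReal.ofReal_pos.2 (by positivity)).ne']
      with ω hω
    obtain ⟨_, ⟨i, rfl⟩, hi⟩ := not_bddBelow_iff.1 hω 0
    exact ⟨i, Nat.one_le_iff_ne_zero.2 (by rintro rfl; simp at hi), hi.le⟩
  have hmemo n := measure_preimage_eq_mul_geometric_of_laplace (hmeas n) (Real.exp_pos _).le hq1 hc
    (hlawq n)
  refine ⟨hrec, indepFun_preLadderPath_ladderHeight hmeas hindep hrec hmemo, fun k => ?_⟩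
  rw [neg_div]
  exact measure_ladderHeight_preimage_neg hmeas hindep hrec hmemo k

/-- For the random walk `X` with i.i.d. discrete Laplace increments and
`ρ := inf{i ≥ 1 : X_i ≤ 0}`: `ρ < ∞` a.s., the stopped path `(ρ, X_1, …, X_{ρ-1})`
is independent of `X_ρ`, and `-X_ρ` is geometric on `{0,1,2,…}` with parameter
`1 - e^{-β/2}`. -/
theorem ladder_epoch_geometric (β : ℝ) (hβ : 0 < β)
    (c : ℝ) (hc : c = ∑' k : ℤ, Real.exp (-(β / 2) * |(k : ℝ)|))
    {Ω : Type*} [MeasurableSpace Ω] (μ : Measure Ω) [IsProbabilityMeasure μ]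
    (U : ℕ → Ω → ℤ) (hmeas : ∀ i, Measurable (U i))
    (hindep : iIndepFun U μ)
    (hlaw : ∀ i : ℕ, ∀ k : ℤ,
      μ {ω | U i ω = k} = ENNReal.ofReal (Real.exp (-(β / 2) * |(k : ℝ)|) / c))
    (X : ℕ → Ω → ℤ) (hX : ∀ n ω, X n ω = ∑ i ∈ Finset.range n, U i ω)
    (ρ : Ω → ℕ) (hρ : ∀ ω, ρ ω = sInf {i : ℕ | 1 ≤ i ∧ X i ω ≤ 0}) :
    (∀ᵐ ω ∂μ, ∃ i : ℕ, 1 ≤ i ∧ X i ω ≤ 0) ∧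
    IndepFun (fun ω => (ρ ω, fun i : ℕ => if i < ρ ω then X i ω else 0))
      (fun ω => X (ρ ω) ω) μ ∧
    (∀ k : ℕ, μ {ω | X (ρ ω) ω = -(k : ℤ)} =
      ENNReal.ofReal ((1 - Real.exp (-β / 2)) * Real.exp (-β / 2) ^ k)) :=
  ladder_epoch_geometric_general β hβ c μ U hmeas hindep hlaw X hX ρ hρ
end

section
/- For β > β_c, δ_2(β) < 1, where δ_2(β) = e^β c_{2β} r_β with r_β = 1 - e^{-β} - e^{-β/2 + arccosh(e^{-β/2} cosh β)} and c_{2β} = (1+e^{-β})/(1-e^{-β}). -/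
noncomputable def arcosh (x : ℝ) : ℝ := Real.log (x + Real.sqrt (x ^ 2 - 1))

set_option maxHeartbeats 1000000 in
/-- For `β > β_c`, `δ₂(β) < 1`, where
`δ₂(β) = e^β (1+e^{-β})/(1-e^{-β}) (1 - e^{-β} - e^{-β/2 + arccosh(e^{-β/2} cosh β)})`. -/
theorem delta2_lt_one (βc β : ℝ) (hβc : 0 < βc)
    (hroot : Real.exp (βc / 2) ^ 3 - Real.exp (βc / 2) ^ 2 - Real.exp (βc / 2) - 1 = 0)
    (hβ : βc < β) :
    Real.exp β * ((1 + Real.exp (-β)) / (1 - Real.exp (-β))) *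
      (1 - Real.exp (-β) -
        Real.exp (-β / 2 + arcosh (Real.exp (-β / 2) * Real.cosh β))) < 1 := by
  set x := Real.exp (-β / 2) with hxdef
  have hx0 : 0 < x := Real.exp_pos _
  have hβ0 : 0 < β := lt_trans hβc hβ
  have hx1 : x < 1 := by
    rw [hxdef, Real.exp_lt_one_iff]; linarith
  set r := Real.exp (-βc / 2) with hrdef
  have hr0 : 0 < r := Real.exp_pos _
  have hxr : x < r := by
    rw [hxdef, hrdef, Real.exp_lt_exp]; linarith
  have hXpos : (0:ℝ) < Real.exp (βc / 2) := Real.exp_pos _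
  have hrX : r = (Real.exp (βc / 2))⁻¹ := by
    rw [hrdef, ← Real.exp_neg]; ring_nf
  have hr1 : r ^ 3 + r ^ 2 + r = 1 := by
    rw [hrX]
    field_simp
    nlinarith [hroot]
  -- cubic positivity
  have hrx : 0 < r - x := by linarith
  have hc : 0 < 1 - x - x ^ 2 - x ^ 3 := by
    nlinarith [hr1, mul_pos hrx (show 0 < r + x by linarith),
      mul_pos hrx (show 0 < r ^ 2 + r * x + x ^ 2 by positivity)]
  have h1x : 0 < 1 - x := by linarith
  have h1x2 : 0 < 1 - x ^ 2 := by nlinarith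
  have hprod : 0 < (1 - x) * (1 - x - x ^ 2 - x ^ 3) * (x ^ 4 + 2 * x + 1) :=
    mul_pos (mul_pos h1x hc) (by positivity)
  have hL : 0 < 1 - 3 * x ^ 2 - x ^ 4 - x ^ 6 := by
    rcases lt_or_ge 0 (1 - 3 * x ^ 2 - x ^ 4 - x ^ 6) with h | h
    · exact h
    · exfalso
      nlinarith [hprod, mul_nonneg h1x2.le (neg_nonneg.mpr h)]
  have hSL : (1 + x ^ 4) ^ 2 - 4 * x ^ 2
      = (1 - x ^ 2) * (1 - 3 * x ^ 2 - x ^ 4 - x ^ 6) := by ring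
  have hS0 : 0 < (1 + x ^ 4) ^ 2 - 4 * x ^ 2 := by
    rw [hSL]; exact mul_pos h1x2 hL
  set s := Real.sqrt ((1 + x ^ 4) ^ 2 - 4 * x ^ 2) with hsdef
  have hs0 : 0 ≤ s := Real.sqrt_nonneg _
  have hs2 : s ^ 2 = (1 + x ^ 4) ^ 2 - 4 * x ^ 2 := Real.sq_sqrt hS0.le
  -- exponentials in terms of x
  have hxx : Real.exp (-β) = x ^ 2 := by
    rw [hxdef, ← Real.exp_nat_mul]
    norm_num
    ring_nf
  have hexpβ : Real.exp β = (x ^ 2)⁻¹ := by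
    rw [← hxx, ← Real.exp_neg, neg_neg]
  -- the arcosh term
  have hu : x * Real.cosh β = (1 + x ^ 4) / (2 * x) := by
    rw [Real.cosh_eq, hexpβ, hxx]
    field_simp
  have harg : arcosh (x * Real.cosh β) = Real.log ((1 + x ^ 4 + s) / (2 * x)) := by
    unfold arcosh
    rw [hu]
    have h1 : ((1 + x ^ 4) / (2 * x)) ^ 2 - 1
        = ((1 + x ^ 4) ^ 2 - 4 * x ^ 2) / (2 * x) ^ 2 := by
      field_simp
      ring
    rw [h1, Real.sqrt_div hS0.le, Real.sqrt_sq (by positivity)]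
    rw [hsdef]
    congr 1
    ring
  have hnum : 0 < (1 + x ^ 4 + s) / (2 * x) :=
    div_pos (by nlinarith) (by positivity)
  have hE : Real.exp (-β / 2 + arcosh (x * Real.cosh β)) = (1 + x ^ 4 + s) / 2 := by
    rw [Real.exp_add, harg, Real.exp_log hnum, ← hxdef]
    field_simp
  -- key inequality
  have h2 : (1 - 3 * x ^ 2 - x ^ 4 - x ^ 6) ^ 2 < ((1 + x ^ 2) * s) ^ 2 := by
    have hb : ((1 + x ^ 2) * s) ^ 2
        = (1 + x ^ 2) ^ 2 * ((1 - x ^ 2) * (1 - 3 * x ^ 2 - x ^ 4 - x ^ 6)) := by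
      rw [mul_pow, hs2, hSL]
    rw [hb]
    have hxl : 0 < x ^ 2 * (1 - 3 * x ^ 2 - x ^ 4 - x ^ 6) := mul_pos (by positivity) hL
    calc (1 - 3 * x ^ 2 - x ^ 4 - x ^ 6) ^ 2
        < (1 - 3 * x ^ 2 - x ^ 4 - x ^ 6) ^ 2
            + 4 * (x ^ 2 * (1 - 3 * x ^ 2 - x ^ 4 - x ^ 6)) := by linarith
      _ = (1 + x ^ 2) ^ 2 * ((1 - x ^ 2) * (1 - 3 * x ^ 2 - x ^ 4 - x ^ 6)) := by ring
  have key : 1 - 3 * x ^ 2 - x ^ 4 - x ^ 6 < (1 + x ^ 2) * s :=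
    lt_of_pow_lt_pow_left₀ 2 (mul_nonneg (by positivity) hs0) h2
  -- finish
  rw [hexpβ, hxx, hE]
  rw [show (x ^ 2)⁻¹ * ((1 + x ^ 2) / (1 - x ^ 2)) * (1 - x ^ 2 - (1 + x ^ 4 + s) / 2)
      = ((1 + x ^ 2) * (2 - 2 * x ^ 2 - (1 + x ^ 4 + s))) / (2 * (x ^ 2 * (1 - x ^ 2)))
      from by field_simp]
  rw [div_lt_one (by positivity)]
  nlinarith [key]
end

section
/- Let (a_L), (b_L), (h_L) be positive sequences with a_L ~ C·h(L) and suppose h(n) = n^{-3/4} e^{c√n} with c < 0. If q_1(n) ~ u·h(n) and q_2(n) ~ v·h(n) are probability mass functions on ℕ, then for each fixed r ≥ 0 the convolution satisfies (q_1 * q_2^{*r})(n) ~ (u + r v)·h(n) as n → ∞. -/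
/-!
Split the convolution sum at its midpoint. On the half `2k ≤ n` the term `p k * q (n - k) / h n`
tends to `p k * b` for each fixed `k`, because `h (n - k) / h n → 1`, and it is dominated,
uniformly in `n`, by a summable sequence in `k`: since `√k + √(n - k) ≥ √n + √k / 2` there,
`h k * h (n - k) ≤ 2 ^ (3/4) * exp (c √k / 2) * h n`. Dominated convergence for series (Tannery's
theorem) gives the limit `(∑ p) * b`, and symmetrically `(∑ q) * a` on the other half. The
theorem follows by induction on `r`, since `q₁ * q₂^{*(r+1)} = (q₁ * q₂^{*r}) * q₂` and all these
convolutions have total mass `1`.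
-/

open Filter

/-- Discrete convolution on `ℕ`. -/
def nconv (f g : ℕ → ℝ) : ℕ → ℝ := fun n => ∑ k ∈ Finset.range (n + 1), f k * g (n - k)

/-- `r`-fold convolution power (with the Dirac mass at `0` for `r = 0`). -/
def nconvPow (f : ℕ → ℝ) : ℕ → ℕ → ℝ
  | 0 => fun n => if n = 0 then 1 else 0
  | r + 1 => nconv (nconvPow f r) f

open Finset Topology Real

lemma PowerSeries.mk_injective (R : Type*) [Semiring R] :
    Function.Injective (PowerSeries.mk : (ℕ → R) → PowerSeries R) :=
  fun f g hfg => funext fun n => by simpa using congrArg (PowerSeries.coeff n) hfg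

lemma mk_nconv (f g : ℕ → ℝ) :
    PowerSeries.mk (nconv f g) = PowerSeries.mk f * PowerSeries.mk g := by
  ext n
  rw [PowerSeries.coeff_mul, Finset.Nat.sum_antidiagonal_eq_sum_range_succ_mk]
  simp [nconv]

lemma mk_nconvPow (f : ℕ → ℝ) (r : ℕ) :
    PowerSeries.mk (nconvPow f r) = PowerSeries.mk f ^ r := by
  induction r with
  | zero => ext n; simp [nconvPow, PowerSeries.coeff_one]
  | succ r ih => rw [nconvPow, mk_nconv, ih, pow_succ]

lemma nconv_nconvPow_zero (f g : ℕ → ℝ) : nconv f (nconvPow g 0) = f :=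
  PowerSeries.mk_injective ℝ <| by rw [mk_nconv, mk_nconvPow, pow_zero, mul_one]

lemma nconv_nconvPow_succ (f g : ℕ → ℝ) (r : ℕ) :
    nconv f (nconvPow g (r + 1)) = nconv (nconv f (nconvPow g r)) g :=
  PowerSeries.mk_injective ℝ <| by simp only [mk_nconv, mk_nconvPow, pow_succ, mul_assoc]

lemma hasSum_nconv {f g : ℕ → ℝ} {a b : ℝ} (hf : HasSum f a) (hg : HasSum g b) :
    HasSum (nconv f g) (a * b) := by
  rw [← hf.tsum_eq, ← hg.tsum_eq]
  exact hasSum_sum_range_mul_of_summable_norm hf.summable.norm hg.summable.norm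

lemma hasSum_nconv_nconvPow {f g : ℕ → ℝ} {a b : ℝ} (hf : HasSum f a) (hg : HasSum g b)
    (r : ℕ) : HasSum (nconv f (nconvPow g r)) (a * b ^ r) := by
  induction r with
  | zero => simpa [nconv_nconvPow_zero] using hf
  | succ r ih => simpa [nconv_nconvPow_succ, pow_succ, mul_assoc] using hasSum_nconv ih hg

lemma nconv_eq_sum_add_sum (f g : ℕ → ℝ) (n : ℕ) :
    nconv f g n = ∑ k ∈ range (n + 1) with 2 * k ≤ n, f k * g (n - k)
      + ∑ k ∈ range (n + 1) with 2 * k < n, g k * f (n - k) := by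
  rw [nconv, ← sum_filter_add_sum_filter_not (range (n + 1)) (fun k => 2 * k ≤ n)]
  congr 1
  refine sum_nbij' (n - ·) (n - ·) ?_ ?_ ?_ ?_ ?_ <;> intro k hk <;>
    simp only [mem_filter, mem_range, not_le] at hk ⊢
  iterate 4 omega
  rw [Nat.sub_sub_self (by omega), mul_comm]

lemma exists_abs_le_mul_of_tendsto_div {f h : ℕ → ℝ} {a : ℝ}
    (hf : Tendsto (fun n => f n / h n) atTop (𝓝 a)) :
    ∃ K, 0 ≤ K ∧ ∀ n, 0 < h n → |f n| ≤ K * h n := by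
  obtain ⟨K, hK⟩ := isBounded_iff_forall_norm_le.mp (Metric.isBounded_range_of_tendsto _ hf)
  refine ⟨K, (norm_nonneg _).trans (hK _ ⟨0, rfl⟩), fun n hn => ?_⟩
  have := hK _ ⟨n, rfl⟩
  rwa [Real.norm_eq_abs, abs_div, abs_of_pos hn, div_le_iff₀ hn] at this

structure IsSubexponentialWeight (h : ℕ → ℝ) : Prop where
  pos : ∀ n, 0 < n → 0 < h n
  tendsto_sub_div : ∀ k, Tendsto (fun n => h (n - k) / h n) atTop (𝓝 1)
  exists_summable_bound : ∃ g : ℕ → ℝ, Summable g ∧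
    ∀ k n, 0 < k → 2 * k ≤ n → h k * h (n - k) ≤ g k * h n

namespace IsSubexponentialWeight

variable {h : ℕ → ℝ}

lemma tendsto_comp_sub_div (hw : IsSubexponentialWeight h) {f : ℕ → ℝ} {a : ℝ}
    (hf : Tendsto (fun n => f n / h n) atTop (𝓝 a)) (k : ℕ) :
    Tendsto (fun n => f (n - k) / h n) atTop (𝓝 a) := by
  have := (hf.comp (tendsto_sub_atTop_nat k)).mul (hw.tendsto_sub_div k)
  rw [mul_one] at this
  refine this.congr' ?_
  filter_upwards [eventually_gt_atTop k] with n hn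
  simp only [Function.comp_apply]
  rw [div_mul_div_cancel₀ (hw.pos _ (by omega)).ne']

lemma tendsto_sum_mul_div (hw : IsSubexponentialWeight h) {p q : ℕ → ℝ} {a b : ℝ}
    (hp : Summable p)
    (hpa : Tendsto (fun n => p n / h n) atTop (𝓝 a))
    (hqb : Tendsto (fun n => q n / h n) atTop (𝓝 b))
    (S : ℕ → Finset ℕ) (hS : ∀ n, ∀ k ∈ S n, 2 * k ≤ n) (hS_ev : ∀ k, ∀ᶠ n in atTop, k ∈ S n) :
    Tendsto (fun n => (∑ k ∈ S n, p k * q (n - k)) / h n) atTop (𝓝 ((∑' k, p k) * b)) := by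
  obtain ⟨g, hg, hhg⟩ := hw.exists_summable_bound
  obtain ⟨Kp, hKp, hp_le⟩ := exists_abs_le_mul_of_tendsto_div hpa
  obtain ⟨Kq, hKq, hq_le⟩ := exists_abs_le_mul_of_tendsto_div hqb
  set F : ℕ → ℕ → ℝ := fun n k => if k ∈ S n then p k * (q (n - k) / h n) else 0
  have hF : ∀ n, (∑ k ∈ S n, p k * q (n - k)) / h n = ∑' k, F n k := fun n => by
    rw [tsum_eq_sum (s := S n) (fun k hk => if_neg hk), sum_div]
    exact sum_congr rfl fun k hk => by rw [if_pos hk, mul_div_assoc]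
  simp_rw [hF, ← tsum_mul_right]
  refine tendsto_tsum_of_dominated_convergence (bound := fun k => Kq * |p k| + Kp * Kq * |g k|)
    ((hp.abs.mul_left Kq).add (hg.abs.mul_left _)) (fun k => ?_) ?_
  · refine ((hw.tendsto_comp_sub_div hqb k).const_mul (p k)).congr' ?_
    filter_upwards [hS_ev k] with n hn
    simp [F, hn]
  · filter_upwards [eventually_gt_atTop 0] with n hn k
    have hn_pos := hw.pos n hn
    by_cases hk : k ∈ S n
    · simp only [F, if_pos hk, norm_mul, norm_div, Real.norm_eq_abs, abs_of_pos hn_pos]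
      rcases Nat.eq_zero_or_pos k with rfl | hk_pos
      · have := (div_le_iff₀ hn_pos).mpr (hq_le n hn_pos)
        rw [Nat.sub_zero, mul_comm Kq]
        nlinarith [abs_nonneg (p 0), abs_nonneg (g 0), mul_nonneg hKp hKq]
      · have h2k := hS n k hk
        have hk' := hw.pos k hk_pos
        have hnk := hw.pos (n - k) (by omega)
        calc |p k| * (|q (n - k)| / h n) ≤ Kp * h k * (Kq * h (n - k) / h n) := by
              gcongr
              exacts [hp_le k hk', hq_le _ hnk]
          _ = Kp * Kq * (h k * h (n - k) / h n) := by ring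
          _ ≤ Kp * Kq * |g k| := by
              gcongr
              rw [div_le_iff₀ hn_pos]
              exact (hhg k n hk_pos h2k).trans (by gcongr; exact le_abs_self _)
          _ ≤ Kq * |p k| + Kp * Kq * |g k| := le_add_of_nonneg_left (by positivity)
    · simp only [F, if_neg hk, norm_zero]
      positivity

theorem tendsto_nconv_div (hw : IsSubexponentialWeight h) {p q : ℕ → ℝ} {a b : ℝ}
    (hp : Summable p) (hq : Summable q)
    (hpa : Tendsto (fun n => p n / h n) atTop (𝓝 a))
    (hqb : Tendsto (fun n => q n / h n) atTop (𝓝 b)) :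
    Tendsto (fun n => nconv p q n / h n) atTop (𝓝 ((∑' k, p k) * b + (∑' k, q k) * a)) := by
  simp_rw [nconv_eq_sum_add_sum, add_div]
  refine (hw.tendsto_sum_mul_div hp hpa hqb _ (fun n k hk => ?_) fun k => ?_).add
    (hw.tendsto_sum_mul_div hq hqb hpa _ (fun n k hk => ?_) fun k => ?_)
  · exact (mem_filter.mp hk).2
  · filter_upwards [eventually_ge_atTop (2 * k)] with n hn
    simp only [mem_filter, mem_range]
    omega
  · exact (mem_filter.mp hk).2.le
  · filter_upwards [eventually_gt_atTop (2 * k)] with n hn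
    simp only [mem_filter, mem_range]
    omega

end IsSubexponentialWeight

lemma summable_exp_mul_sqrt {c : ℝ} (hc : c < 0) : Summable fun k : ℕ => exp (c * √k) := by
  refine summable_of_isBigO_nat (Real.summable_one_div_nat_pow.mpr one_lt_two)
    (Asymptotics.IsBigO.of_bound (24 / c ^ 4) ?_)
  filter_upwards [eventually_gt_atTop 0] with k hk
  have hk' : (0 : ℝ) < k := Nat.cast_pos.mpr hk
  have hexp := pow_div_factorial_le_exp (-c * √k) (by nlinarith [sqrt_nonneg k]) 4
  have hc4 : 0 < c ^ 4 := Even.pow_pos (by decide) hc.ne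
  have hsqrt : √(k : ℝ) ^ 4 = (k : ℝ) ^ 2 := by
    rw [show 4 = 2 * 2 from rfl, pow_mul, sq_sqrt hk'.le]
  rw [mul_pow, neg_pow, hsqrt] at hexp
  norm_num at hexp
  rw [Real.norm_of_nonneg (exp_pos _).le, Real.norm_of_nonneg (by positivity)]
  calc exp (c * √k) = (exp (-(c * √k)))⁻¹ := by rw [exp_neg, inv_inv]
    _ ≤ (c ^ 4 * k ^ 2 / 24)⁻¹ := inv_anti₀ (by positivity) hexp
    _ = 24 / c ^ 4 * (1 / k ^ 2) := by field_simp

lemma sqrt_add_le_sqrt_add_half_sqrt {x y : ℝ} (hx : 0 ≤ x) (hxy : x ≤ y) :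
    √(x + y) ≤ √y + √x / 2 := by
  rw [Real.sqrt_le_iff]
  refine ⟨by positivity, ?_⟩
  nlinarith [sq_sqrt hx, sq_sqrt (hx.trans hxy), sqrt_le_sqrt hxy, sqrt_nonneg x]

lemma rpow_mul_exp_mul_rpow_mul_exp_le {α c x y : ℝ} (hα : α ≤ 0) (hc : c ≤ 0) (hx : 1 ≤ x)
    (hxy : x ≤ y) :
    x ^ α * exp (c * √x) * (y ^ α * exp (c * √y))
      ≤ 2 ^ (-α) * exp (c / 2 * √x) * ((x + y) ^ α * exp (c * √(x + y))) := by
  have hx_rpow : x ^ α ≤ 1 := rpow_le_one_of_one_le_of_nonpos hx hα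
  have hy_rpow : y ^ α ≤ 2 ^ (-α) * (x + y) ^ α :=
    calc y ^ α ≤ ((x + y) / 2) ^ α := rpow_le_rpow_of_nonpos (by linarith) (by linarith) hα
      _ = 2 ^ (-α) * (x + y) ^ α := by
        rw [div_rpow (by linarith) zero_le_two, rpow_neg zero_le_two, div_eq_inv_mul]
  have hexp : exp (c * √x) * exp (c * √y) ≤ exp (c / 2 * √x) * exp (c * √(x + y)) := by
    rw [← exp_add, ← exp_add, exp_le_exp]
    nlinarith [mul_le_mul_of_nonpos_left
      (sqrt_add_le_sqrt_add_half_sqrt (zero_le_one.trans hx) hxy) hc]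
  calc x ^ α * exp (c * √x) * (y ^ α * exp (c * √y))
      = x ^ α * y ^ α * (exp (c * √x) * exp (c * √y)) := by ring
    _ ≤ 1 * (2 ^ (-α) * (x + y) ^ α) * (exp (c / 2 * √x) * exp (c * √(x + y))) := by
      have hy : 0 ≤ y ^ α := rpow_nonneg (by linarith) α
      exact mul_le_mul (mul_le_mul hx_rpow hy_rpow hy zero_le_one) hexp (by positivity)
        (by linarith)
    _ = _ := by ring

lemma tendsto_natCast_sub_div_natCast (k : ℕ) :
    Tendsto (fun n : ℕ => ((n - k : ℕ) : ℝ) / n) atTop (𝓝 1) := by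
  have := (tendsto_const_div_atTop_nhds_zero_nat (k : ℝ)).const_sub 1
  rw [sub_zero] at this
  refine this.congr' ?_
  filter_upwards [eventually_gt_atTop k] with n hn
  rw [Nat.cast_sub hn.le, sub_div, div_self (Nat.cast_ne_zero.mpr (by omega))]

lemma tendsto_sqrt_natCast_sub_sub_sqrt (k : ℕ) :
    Tendsto (fun n : ℕ => √((n - k : ℕ) : ℝ) - √n) atTop (𝓝 0) := by
  have hlower : Tendsto (fun n : ℕ => -(k / √n)) atTop (𝓝 0) := by
    simpa using (tendsto_const_nhds.div_atTop
      (tendsto_sqrt_atTop.comp tendsto_natCast_atTop_atTop)).neg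
  refine tendsto_of_tendsto_of_tendsto_of_le_of_le' hlower tendsto_const_nhds ?_ ?_
  · filter_upwards [eventually_gt_atTop k] with n hn
    have hn' : (0 : ℝ) < n := Nat.cast_pos.mpr (by omega)
    have hsub : ((n - k : ℕ) : ℝ) = n - k := Nat.cast_sub hn.le
    have hle : √((n - k : ℕ) : ℝ) ≤ √n :=
      sqrt_le_sqrt (by rw [hsub]; linarith [k.cast_nonneg (α := ℝ)])
    rw [neg_le, neg_sub, le_div_iff₀ (sqrt_pos.mpr hn')]
    have := mul_le_mul_of_nonneg_left hle (sqrt_nonneg ((n - k : ℕ) : ℝ))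
    rw [mul_self_sqrt (Nat.cast_nonneg _)] at this
    nlinarith [mul_self_sqrt hn'.le]
  · filter_upwards with n
    exact sub_nonpos.mpr (sqrt_le_sqrt (by exact_mod_cast n.sub_le k))

theorem isSubexponentialWeight_rpow_mul_exp {α c : ℝ} (hα : α ≤ 0) (hc : c < 0) :
    IsSubexponentialWeight fun n : ℕ => (n : ℝ) ^ α * exp (c * √n) where
  pos n hn := by
    have : (0 : ℝ) < n := Nat.cast_pos.mpr hn
    positivity
  tendsto_sub_div k := by
    have := ((continuousAt_rpow_const 1 α (Or.inl one_ne_zero)).tendsto.comp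
      (tendsto_natCast_sub_div_natCast k)).mul
      ((continuous_exp.tendsto _).comp ((tendsto_sqrt_natCast_sub_sub_sqrt k).const_mul c))
    rw [one_rpow, mul_zero, exp_zero, mul_one] at this
    refine this.congr' ?_
    filter_upwards [eventually_gt_atTop k] with n hn
    rw [Function.comp_apply, Function.comp_apply,
      div_rpow (Nat.cast_nonneg _) (Nat.cast_nonneg _), mul_sub, exp_sub, div_mul_div_comm]
  exists_summable_bound := by
    refine ⟨fun k => 2 ^ (-α) * exp (c / 2 * √k),
      (summable_exp_mul_sqrt (by linarith)).mul_left _, fun k n hk hkn => ?_⟩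
    have := rpow_mul_exp_mul_rpow_mul_exp_le hα hc.le (x := k) (y := ((n - k : ℕ) : ℝ))
      (by exact_mod_cast hk) (by exact_mod_cast (by omega : k ≤ n - k))
    rwa [← Nat.cast_add, Nat.add_sub_cancel' (by omega)] at this

theorem conv_subexponential_asymptotics_general
    (c : ℝ) (hc : c < 0)
    (h : ℕ → ℝ)
    (hh : ∀ n : ℕ, h n = (n : ℝ) ^ (-(3:ℝ)/4) * Real.exp (c * Real.sqrt n))
    (q₁ q₂ : ℕ → ℝ) (u v : ℝ)
    (hq₁sum : HasSum q₁ 1) (hq₂sum : HasSum q₂ 1)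
    (hq₁asym : Tendsto (fun n => q₁ n / h n) atTop (nhds u))
    (hq₂asym : Tendsto (fun n => q₂ n / h n) atTop (nhds v))
    (r : ℕ) :
    Tendsto (fun n => nconv q₁ (nconvPow q₂ r) n / h n) atTop (nhds (u + r * v)) := by
  have hw : IsSubexponentialWeight h := by
    rw [funext hh]
    exact isSubexponentialWeight_rpow_mul_exp (by norm_num) hc
  have hsum (s : ℕ) : HasSum (nconv q₁ (nconvPow q₂ s)) 1 := by
    simpa using hasSum_nconv_nconvPow hq₁sum hq₂sum s
  induction r with
  | zero => simpa [nconv_nconvPow_zero] using hq₁asym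
  | succ s ih =>
    rw [nconv_nconvPow_succ]
    convert hw.tendsto_nconv_div (hsum s).summable hq₂sum.summable ih hq₂asym using 2
    rw [(hsum s).tsum_eq, hq₂sum.tsum_eq]
    push_cast
    ring

/-- If `q₁(n) ~ u·h(n)` and `q₂(n) ~ v·h(n)` for the subexponential sequence
`h(n) = n^{-3/4} e^{c√n}` with `c < 0`, where `q₁, q₂` are probability mass
functions on `ℕ` supported on `{2,3,…}`, then for each fixed `r ≥ 0`,
`(q₁ * q₂^{*r})(n) ~ (u + r v)·h(n)` as `n → ∞`. -/
theorem conv_subexponential_asymptotics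
    (c : ℝ) (hc : c < 0)
    (h : ℕ → ℝ)
    (hh : ∀ n : ℕ, h n = (n : ℝ) ^ (-(3:ℝ)/4) * Real.exp (c * Real.sqrt n))
    (q₁ q₂ : ℕ → ℝ) (u v : ℝ) (hu : 0 < u) (hv : 0 < v)
    (hq₁pos : ∀ n, 0 ≤ q₁ n) (hq₂pos : ∀ n, 0 ≤ q₂ n)
    (hq₁sum : HasSum q₁ 1) (hq₂sum : HasSum q₂ 1)
    (hq₁supp : ∀ n < 2, q₁ n = 0) (hq₂supp : ∀ n < 2, q₂ n = 0)
    (hq₁asym : Tendsto (fun n => q₁ n / h n) atTop (nhds u))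
    (hq₂asym : Tendsto (fun n => q₂ n / h n) atTop (nhds v))
    (r : ℕ) :
    Tendsto (fun n => nconv q₁ (nconvPow q₂ r) n / h n) atTop (nhds (u + r * v)) :=
  conv_subexponential_asymptotics_general c hc h hh q₁ q₂ u v hq₁sum hq₂sum hq₁asym hq₂asym r
end

section
/- (Euler–Maclaurin estimate for G_N) For every K ∈ (0, β) there exist C_K > 0 and n_K such that for all n ≥ n_K, sup over h ∈ [-β+K, β-K] of | G_n(h) - G(h) | ≤ C_K/n², where G_n(h) := (1/n) Σ_{i=1}^n L( (h/2)(1 - (2i-1)/n) ) and G(h) := ∫_0^1 L(h(1/2 - x)) dx. -/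
/-!
On `(-β/2, β/2)` the series defining `L` is a pair of geometric series, so `L` is the logarithm
of an explicit smooth positive function; in particular `L'` is Lipschitz on the compact interval
`[-(β-K)/2, (β-K)/2]`, which contains every argument `h (1/2 - x)` with `|h| ≤ β - K`,
`x ∈ [0, 1]`. Now `G_n(h)` is the composite midpoint rule with `n` nodes for the integral
`G(h)`, and the midpoint rule with step `δ` makes an error `O(δ³)` per cell when the integrand
has a Lipschitz derivative, because the linear term of the integrand about the midpoint
integrates to zero. Summing over the `n` cells gives `O(1/n²)`.
-/

open Set Real

noncomputable def discreteLaplaceSum (b x : ℝ) : ℝ :=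
  (1 - exp (x - b))⁻¹ + exp (-x - b) * (1 - exp (-x - b))⁻¹

section DiscreteLaplace

variable {b x : ℝ}

theorem hasSum_discreteLaplaceSum (hx : |x| < b) :
    HasSum (fun k : ℤ => exp (x * k) * exp (-b * |(k : ℝ)|)) (discreteLaplaceSum b x) := by
  obtain ⟨hx₁, hx₂⟩ := abs_lt.mp hx
  apply HasSum.of_nat_of_neg_add_one
  · have e : (fun n : ℕ => exp (x * ((n : ℤ) : ℝ)) * exp (-b * |((n : ℤ) : ℝ)|))
        = fun n : ℕ => exp (x - b) ^ n := by
      funext n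
      rw [← exp_nat_mul]
      push_cast
      rw [abs_of_nonneg (Nat.cast_nonneg n), ← exp_add]
      ring_nf
    rw [e]
    exact hasSum_geometric_of_lt_one (exp_pos _).le (exp_lt_one_iff.mpr (by linarith))
  · have e : (fun n : ℕ => exp (x * ((-(n + 1) : ℤ) : ℝ)) * exp (-b * |((-(n + 1) : ℤ) : ℝ)|))
        = fun n : ℕ => exp (-x - b) * exp (-x - b) ^ n := by
      funext n
      rw [← exp_nat_mul]
      push_cast
      rw [abs_of_nonpos (neg_nonpos.mpr (by positivity)), ← exp_add, ← exp_add]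
      ring_nf
    rw [e]
    exact (hasSum_geometric_of_lt_one (exp_pos _).le (exp_lt_one_iff.mpr (by linarith))).mul_left _

theorem discreteLaplaceSum_pos (hx : |x| < b) : 0 < discreteLaplaceSum b x := by
  obtain ⟨hx₁, hx₂⟩ := abs_lt.mp hx
  have h₁ : exp (x - b) < 1 := exp_lt_one_iff.mpr (by linarith)
  have h₂ : exp (-x - b) < 1 := exp_lt_one_iff.mpr (by linarith)
  unfold discreteLaplaceSum
  have := inv_pos.mpr (sub_pos.mpr h₂)
  positivity

theorem contDiffAt_discreteLaplaceSum {n : WithTop ℕ∞} (hx : |x| < b) :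
    ContDiffAt ℝ n (discreteLaplaceSum b) x := by
  obtain ⟨hx₁, hx₂⟩ := abs_lt.mp hx
  have h₁ : exp (x - b) ≠ 1 := (exp_lt_one_iff.mpr (by linarith)).ne
  have h₂ : exp (-x - b) ≠ 1 := (exp_lt_one_iff.mpr (by linarith)).ne
  unfold discreteLaplaceSum
  have hexp : ∀ g : ℝ → ℝ, ContDiff ℝ n g → ContDiffAt ℝ n (fun y => exp (g y)) x :=
    fun g hg => (contDiff_exp.comp hg).contDiffAt
  refine ((contDiffAt_const.sub (hexp _ (by fun_prop))).inv (sub_ne_zero.mpr h₁.symm)).add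
    ((hexp _ (by fun_prop)).mul ((contDiffAt_const.sub (hexp _ (by fun_prop))).inv
      (sub_ne_zero.mpr h₂.symm)))

end DiscreteLaplace

theorem contDiffOn_of_eq_log_tsum {b c : ℝ} (hc : c = ∑' k : ℤ, exp (-b * |(k : ℝ)|))
    {L : ℝ → ℝ}
    (hL : ∀ x, L x = log (∑' k : ℤ, exp (x * k) * exp (-b * |(k : ℝ)|) / c))
    {n : WithTop ℕ∞} : ContDiffOn ℝ n L (Ioo (-b) b) := by
  intro x hx
  have hx' : |x| < b := abs_lt.mpr hx
  have hb : |(0 : ℝ)| < b := by simpa using (abs_nonneg x).trans_lt hx'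
  have hc₀ : 0 < c := by
    have hc' := (hasSum_discreteLaplaceSum hb).tsum_eq
    simp only [zero_mul, exp_zero, one_mul] at hc'
    exact hc ▸ hc' ▸ discreteLaplaceSum_pos hb
  have hLeq : ∀ y ∈ Ioo (-b) b, L y = log (discreteLaplaceSum b y / c) := fun y hy => by
    rw [hL, tsum_div_const, (hasSum_discreteLaplaceSum (abs_lt.mpr hy)).tsum_eq]
  refine ContDiffWithinAt.congr ?_ hLeq (hLeq x hx)
  exact (((contDiffAt_discreteLaplaceSum hx').div_const c).log
    (div_pos (discreteLaplaceSum_pos hx') hc₀).ne').contDiffWithinAt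

section MidpointRule

variable {φ φ' : ℝ → ℝ} {K : NNReal}

theorem abs_sub_sub_mul_le_of_lipschitzOnWith_deriv {u v m x : ℝ}
    (hφ : ∀ t ∈ Icc u v, HasDerivAt φ (φ' t) t) (hφ' : LipschitzOnWith K φ' (Icc u v))
    (hm : m ∈ Icc u v) (hx : x ∈ Icc u v) :
    |φ x - φ m - φ' m * (x - m)| ≤ K * (v - u) * |x - m| := by
  have hderiv : ∀ t ∈ Icc u v,
      HasDerivWithinAt (fun t => φ t - φ' m * t) (φ' t - φ' m) (Icc u v) t := fun t ht => by
    have := (hφ t ht).sub ((hasDerivAt_id t).const_mul (φ' m))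
    rw [mul_one] at this
    exact this.hasDerivWithinAt
  have hbound : ∀ t ∈ Icc u v, ‖φ' t - φ' m‖ ≤ K * (v - u) := fun t ht => by
    calc ‖φ' t - φ' m‖ = dist (φ' t) (φ' m) := rfl
      _ ≤ K * dist t m := hφ'.dist_le_mul t ht m hm
      _ ≤ K * (v - u) := by
        gcongr
        rw [Real.dist_eq, abs_le]
        constructor <;> linarith [ht.1, ht.2, hm.1, hm.2]
  have := (convex_Icc u v).norm_image_sub_le_of_norm_hasDerivWithin_le hderiv hbound hm hx
  rw [Real.norm_eq_abs, Real.norm_eq_abs] at this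
  convert this using 2
  ring

theorem abs_mul_midpoint_sub_integral_le {u v : ℝ} (huv : u ≤ v)
    (hφ : ∀ t ∈ Icc u v, HasDerivAt φ (φ' t) t) (hφ' : LipschitzOnWith K φ' (Icc u v)) :
    |(v - u) * φ ((u + v) / 2) - ∫ x in u..v, φ x| ≤ K * (v - u) ^ 3 := by
  set m := (u + v) / 2 with hm_def
  have hm : m ∈ Icc u v := ⟨by linarith, by linarith⟩
  have hlini : IntervalIntegrable (fun x => φ m + φ' m * (x - m)) MeasureTheory.volume u v :=
    Continuous.intervalIntegrable (by fun_prop) u v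
  have hφi : IntervalIntegrable φ MeasureTheory.volume u v :=
    ContinuousOn.intervalIntegrable <| (uIcc_of_le huv).symm ▸
      fun t ht => (hφ t ht).continuousAt.continuousWithinAt
  have hlin : ∫ x in u..v, (φ m + φ' m * (x - m)) = (v - u) * φ m := by
    rw [intervalIntegral.integral_add intervalIntegrable_const
      (Continuous.intervalIntegrable (by fun_prop) u v),
      intervalIntegral.integral_const_mul, intervalIntegral.integral_comp_sub_right (fun x => x),
      integral_id, intervalIntegral.integral_const, smul_eq_mul]
    ring
  have herr : (v - u) * φ m - ∫ x in u..v, φ x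
      = -∫ x in u..v, (φ x - φ m - φ' m * (x - m)) := by
    rw [← hlin, ← intervalIntegral.integral_sub hlini hφi, ← intervalIntegral.integral_neg]
    congr 1
    ext x
    ring
  have hbound : ∀ x ∈ uIoc u v, ‖φ x - φ m - φ' m * (x - m)‖ ≤ K * (v - u) * (v - u) := by
    intro x hx
    rw [uIoc_of_le huv] at hx
    have hx' : x ∈ Icc u v := Ioc_subset_Icc_self hx
    refine (abs_sub_sub_mul_le_of_lipschitzOnWith_deriv hφ hφ' hm hx').trans ?_
    gcongr
    rw [abs_le]
    constructor <;> linarith [hx'.1, hx'.2]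
  rw [herr, abs_neg]
  calc _ ≤ K * (v - u) * (v - u) * |v - u| :=
        intervalIntegral.norm_integral_le_of_norm_le_const hbound
    _ = K * (v - u) ^ 3 := by rw [abs_of_nonneg (sub_nonneg.mpr huv)]; ring

theorem abs_midpoint_sum_sub_integral_le {a b : ℝ} (hab : a ≤ b) {n : ℕ} (hn : 0 < n)
    (hφ : ∀ t ∈ Icc a b, HasDerivAt φ (φ' t) t) (hφ' : LipschitzOnWith K φ' (Icc a b)) :
    |(b - a) / n * ∑ i ∈ Finset.range n, φ (a + (i + 1 / 2) * ((b - a) / n))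
        - ∫ x in a..b, φ x| ≤ K * (b - a) ^ 3 / n ^ 2 := by
  set δ := (b - a) / n
  set node : ℕ → ℝ := fun i => a + i * δ
  have hn' : (0 : ℝ) < n := Nat.cast_pos.mpr hn
  have hδ : 0 ≤ δ := div_nonneg (sub_nonneg.mpr hab) hn'.le
  have hnode : ∀ i < n, Icc (node i) (node (i + 1)) ⊆ Icc a b := by
    intro i hi
    have hi' : ((i + 1 : ℕ) : ℝ) ≤ n := by exact_mod_cast hi
    refine Icc_subset_Icc (le_add_of_nonneg_right (by positivity)) ?_
    calc node (i + 1) ≤ a + n * δ := by simp only [node]; gcongr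
      _ = b := by simp only [δ]; field_simp; ring
  have hpiece : ∀ i < n, |δ * φ (a + (i + 1 / 2) * δ) - ∫ x in node i..node (i + 1), φ x|
      ≤ K * δ ^ 3 := by
    intro i hi
    have hstep : node (i + 1) - node i = δ := by simp only [node]; push_cast; ring
    have hmid : (node i + node (i + 1)) / 2 = a + (i + 1 / 2) * δ := by
      simp only [node]; push_cast; ring
    have := abs_mul_midpoint_sub_integral_le (by linarith) (fun t ht => hφ t (hnode i hi ht))
      (hφ'.mono (hnode i hi))
    rwa [hstep, hmid] at this
  have hsplit : ∫ x in a..b, φ x = ∑ i ∈ Finset.range n, ∫ x in node i..node (i + 1), φ x := by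
    have hend : node n = b := by simp only [node, δ]; field_simp; ring
    rw [intervalIntegral.sum_integral_adjacent_intervals, hend]
    · simp [node]
    intro i hi
    refine ContinuousOn.intervalIntegrable ?_
    rw [uIcc_of_le (by simp only [node]; push_cast; linarith)]
    exact fun t ht => (hφ t (hnode i hi ht)).continuousAt.continuousWithinAt
  rw [hsplit, Finset.mul_sum, ← Finset.sum_sub_distrib]
  calc _ ≤ ∑ i ∈ Finset.range n, (K : ℝ) * δ ^ 3 :=
        (Finset.abs_sum_le_sum_abs _ _).trans
          (Finset.sum_le_sum fun i hi => hpiece i (Finset.mem_range.mp hi))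
    _ = K * (b - a) ^ 3 / n ^ 2 := by
      rw [Finset.sum_const, Finset.card_range, nsmul_eq_mul]
      simp only [δ]
      field_simp

theorem abs_midpoint_sum_sub_integral_comp_le {f f' : ℝ → ℝ} {r : ℝ}
    (hf : ∀ y ∈ Icc (-r) r, HasDerivAt f (f' y) y) (hf' : LipschitzOnWith K f' (Icc (-r) r))
    {h : ℝ} (hh : |h| ≤ 2 * r) {n : ℕ} (hn : 0 < n) :
    |1 / (n : ℝ) * ∑ i ∈ Finset.range n, f ((h / 2) * (1 - (2 * ((i : ℝ) + 1) - 1) / n))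
        - ∫ x in (0 : ℝ)..1, f (h * (1 / 2 - x))| ≤ K * h ^ 2 / n ^ 2 := by
  have hmaps : ∀ t ∈ Icc (0 : ℝ) 1, h * (1 / 2 - t) ∈ Icc (-r) r := fun t ht => by
    have : |h * (1 / 2 - t)| ≤ r := by
      rw [abs_mul]
      have : |1 / 2 - t| ≤ 1 / 2 := abs_le.mpr ⟨by linarith [ht.2], by linarith [ht.1]⟩
      nlinarith [abs_nonneg h, abs_nonneg (1 / 2 - t)]
    exact abs_le.mp this
  have hφ : ∀ t ∈ Icc (0 : ℝ) 1,
      HasDerivAt (fun x => f (h * (1 / 2 - x))) (f' (h * (1 / 2 - t)) * -h) t := fun t ht => by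
    have := (hasDerivAt_id t).const_sub (1 / 2 : ℝ) |>.const_mul h
    rw [mul_neg_one] at this
    exact (hf _ (hmaps t ht)).comp t this
  have hφ' : LipschitzOnWith (K * ‖h‖₊ ^ 2) (fun t => f' (h * (1 / 2 - t)) * -h) (Icc 0 1) := by
    refine LipschitzOnWith.of_dist_le_mul fun s hs t ht => ?_
    have hKf := hf'.dist_le_mul _ (hmaps s hs) _ (hmaps t ht)
    simp only [Real.dist_eq] at hKf ⊢
    rw [← sub_mul, abs_mul, abs_neg]
    calc |f' (h * (1 / 2 - s)) - f' (h * (1 / 2 - t))| * |h|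
        ≤ K * |h * (1 / 2 - s) - h * (1 / 2 - t)| * |h| := by gcongr
      _ = (K * ‖h‖₊ ^ 2 : NNReal) * |s - t| := by
        rw [show h * (1 / 2 - s) - h * (1 / 2 - t) = -h * (s - t) by ring, abs_mul, abs_neg]
        push_cast
        rw [Real.norm_eq_abs]
        ring
  have hnodes : ∀ i : ℕ, (h / 2) * (1 - (2 * ((i : ℝ) + 1) - 1) / n)
      = h * (1 / 2 - (0 + (i + 1 / 2) * ((1 - 0) / n))) := fun i => by ring
  simp only [hnodes]
  convert abs_midpoint_sum_sub_integral_le zero_le_one hn hφ hφ' using 1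
  · norm_num
  · push_cast
    rw [Real.norm_eq_abs, sq_abs]
    ring

end MidpointRule

theorem Gn_approx_G_general (β : ℝ)
    (c : ℝ) (hc : c = ∑' k : ℤ, Real.exp (-(β / 2) * |(k : ℝ)|))
    (L : ℝ → ℝ)
    (hL : ∀ h : ℝ, L h =
      Real.log (∑' k : ℤ, Real.exp (h * k) * Real.exp (-(β / 2) * |(k : ℝ)|) / c))
    (G : ℝ → ℝ)
    (hG : ∀ h : ℝ, G h = ∫ x in (0:ℝ)..1, L (h * (1 / 2 - x)))
    (Gn : ℕ → ℝ → ℝ)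
    (hGn : ∀ n : ℕ, ∀ h : ℝ, Gn n h =
      (1 / (n : ℝ)) * ∑ i ∈ Finset.range n,
        L ((h / 2) * (1 - (2 * ((i : ℝ) + 1) - 1) / n))) :
    ∀ K ∈ Ioo (0:ℝ) β, ∃ C > 0, ∃ nK : ℕ, ∀ n ≥ nK,
      ∀ h ∈ Icc (-β + K) (β - K), |Gn n h - G h| ≤ C / (n : ℝ) ^ 2 := by
  rintro K ⟨hK₀, hKβ⟩
  set r := (β - K) / 2 with hr
  have hrβ : Icc (-r) r ⊆ Ioo (-(β / 2)) (β / 2) := Icc_subset_Ioo (by linarith) (by linarith)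
  have hLsmooth : ContDiffOn ℝ 2 L (Ioo (-(β / 2)) (β / 2)) := contDiffOn_of_eq_log_tsum hc hL
  have hL' : ∀ y ∈ Icc (-r) r, HasDerivAt L (deriv L y) y := fun y hy =>
    ((hLsmooth.contDiffAt (isOpen_Ioo.mem_nhds (hrβ hy))).differentiableAt
      (by norm_num)).hasDerivAt
  obtain ⟨KL, hKL⟩ := ((hLsmooth.deriv_of_isOpen isOpen_Ioo (by norm_num)).mono hrβ)
    |>.exists_lipschitzOnWith one_ne_zero (convex_Icc _ _) isCompact_Icc
  refine ⟨KL * β ^ 2 + 1, by positivity, 1, fun n hn h hh => ?_⟩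
  have hhr : |h| ≤ 2 * r := abs_le.mpr ⟨by linarith [hh.1], by linarith [hh.2]⟩
  have hhβ : h ^ 2 ≤ β ^ 2 := sq_le_sq' (by linarith [hh.1]) (by linarith [hh.2])
  rw [hGn, hG]
  refine (abs_midpoint_sum_sub_integral_comp_le hL' hKL hhr hn).trans ?_
  gcongr
  nlinarith [KL.coe_nonneg]

/-- Euler–Maclaurin estimate: for every `K ∈ (0, β)` there exist `C_K > 0` and `n_K`
such that for all `n ≥ n_K` and all `h ∈ [-β+K, β-K]`, `|G_n(h) - G(h)| ≤ C_K/n²`,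
where `G_n(h) = (1/n) Σ_{i=1}^n L((h/2)(1-(2i-1)/n))` and
`G(h) = ∫_0^1 L(h(1/2-x)) dx`. -/
theorem Gn_approx_G (β : ℝ) (hβ : 0 < β)
    (c : ℝ) (hc : c = ∑' k : ℤ, Real.exp (-(β / 2) * |(k : ℝ)|))
    (L : ℝ → ℝ)
    (hL : ∀ h : ℝ, L h =
      Real.log (∑' k : ℤ, Real.exp (h * k) * Real.exp (-(β / 2) * |(k : ℝ)|) / c))
    (G : ℝ → ℝ)
    (hG : ∀ h : ℝ, G h = ∫ x in (0:ℝ)..1, L (h * (1 / 2 - x)))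
    (Gn : ℕ → ℝ → ℝ)
    (hGn : ∀ n : ℕ, ∀ h : ℝ, Gn n h =
      (1 / (n : ℝ)) * ∑ i ∈ Finset.range n,
        L ((h / 2) * (1 - (2 * ((i : ℝ) + 1) - 1) / n))) :
    ∀ K ∈ Ioo (0:ℝ) β, ∃ C > 0, ∃ nK : ℕ, ∀ n ≥ nK,
      ∀ h ∈ Icc (-β + K) (β - K), |Gn n h - G h| ≤ C / (n : ℝ) ^ 2 :=
  Gn_approx_G_general β c hc L hL G hG Gn hGn
end

section
/- Let X be a random walk with i.i.d. increments of tilted law P̃_x for x in a compact interval [x_1, x_2] ⊂ (0, β/2). Then there exists r̃ > 0 such that 0 ≤ P̃_x(X_i > 0 for 1 ≤ i ≤ k) - κ(x) ≤ Σ_{j>k} e^{-r̃ j} for all x ∈ [x_1,x_2], so P̃_x(X_{[1,k]} > 0) converges to κ(x) as k → ∞ uniformly in x; consequently x ↦ κ(x) is continuous on (0, β/2). -/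
/-!
Chernoff's bound with tilt parameter `x₁` gives `P̃_x(X_j ≤ 0) ≤ ρ(x)^j`, where
`ρ(x) = M(x - x₁) / M(x)` and `M` is the moment generating function of `P_β`. Since `M` is even
and strictly increasing on `[0, β/2)`, `ρ < 1`; being continuous, `ρ` is bounded by some `e^{-r}`
on the compact `[x₁, x₂]`. A path that survives up to time `k` but not forever has `X_j ≤ 0` for
some `j > k`, so the union bound gives `0 ≤ P_k(x) - κ(x) ≤ ∑_{j>k} e^{-r j}` uniformly. Each
`P_k` is a sum, over the first `k` increments, of products of tilted weights dominated by a
summable family, hence continuous in `x`, and so is its uniform limit `κ`.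
-/

open MeasureTheory ProbabilityTheory Set Filter Topology
open scoped ENNReal

theorem ENNReal.tsum_fin_prod_eq_pow {α : Type*} (g : α → ℝ≥0∞) (n : ℕ) :
    ∑' v : Fin n → α, ∏ i, g (v i) = (∑' a, g a) ^ n := by
  induction n with
  | zero => simp
  | succ n ih =>
    rw [← (Fin.consEquiv fun _ => α).tsum_eq, ENNReal.tsum_prod', pow_succ', ← ih,
      ← ENNReal.tsum_mul_right]
    refine tsum_congr fun a => ?_
    rw [← ENNReal.tsum_mul_left]
    refine tsum_congr fun v => ?_
    simp [Fin.consEquiv, Fin.prod_univ_succ]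

theorem summable_fin_prod {α : Type*} {f : α → ℝ} (hf0 : 0 ≤ f) (hf : Summable f) (n : ℕ) :
    Summable fun v : Fin n → α => ∏ i, f (v i) := by
  lift f to α → NNReal using hf0
  simp only [← NNReal.coe_prod, NNReal.summable_coe] at hf ⊢
  rw [← ENNReal.tsum_coe_ne_top_iff_summable] at hf ⊢
  push_cast
  rw [ENNReal.tsum_fin_prod_eq_pow fun a => (f a : ℝ≥0∞)]
  exact ENNReal.pow_ne_top hf

theorem continuousOn_tsum_indicator_prod {X α : Type*} [TopologicalSpace X] {s : Set X}
    {g : X → α → ℝ} {d : α → ℝ} (hg : ∀ a, ContinuousOn (fun x => g x a) s)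
    (hg0 : ∀ x ∈ s, ∀ a, 0 ≤ g x a) (hgd : ∀ x ∈ s, ∀ a, g x a ≤ d a) (hd0 : 0 ≤ d)
    (hd : Summable d) {n : ℕ} (S : Set (Fin n → α)) :
    ContinuousOn (fun x => ∑' v, S.indicator (fun v => ∏ i, g x (v i)) v) s := by
  refine continuousOn_tsum (fun v => ?_) (summable_fin_prod hd0 hd n) fun v x hx => ?_
  · by_cases hv : v ∈ S
    · simpa only [Set.indicator_of_mem hv] using continuousOn_finsetProd _ fun i _ => hg (v i)
    · simpa only [Set.indicator_of_notMem hv] using continuousOn_const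
  · rw [Real.norm_of_nonneg
      (Set.indicator_nonneg (fun v _ => Finset.prod_nonneg fun i _ => hg0 x hx (v i)) v)]
    exact Set.indicator_apply_le' (fun _ => Finset.prod_le_prod (fun i _ => hg0 x hx _)
      fun i _ => hgd x hx _) fun _ => Finset.prod_nonneg fun i _ => hd0 _

theorem tendstoUniformlyOn_of_sub_le {ι X : Type*} {F : ι → X → ℝ} {f : X → ℝ} {l : Filter ι}
    {s : Set X} {a : ι → ℝ} (ha : Tendsto a l (𝓝 0))
    (h : ∀ x ∈ s, ∀ i, 0 ≤ F i x - f x ∧ F i x - f x ≤ a i) : TendstoUniformlyOn F f l s := by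
  rw [Metric.tendstoUniformlyOn_iff]
  intro ε hε
  filter_upwards [ha.eventually (gt_mem_nhds hε)] with i hi x hx
  rw [Real.dist_eq, abs_sub_comm, abs_of_nonneg (h x hx i).1]
  exact (h x hx i).2.trans_lt hi

theorem continuousOn_Ioo_of_forall_Icc {f : ℝ → ℝ} {a b : ℝ}
    (h : ∀ x₁ x₂, a < x₁ → x₁ ≤ x₂ → x₂ < b → ContinuousOn f (Icc x₁ x₂)) :
    ContinuousOn f (Ioo a b) := by
  intro x hx
  obtain ⟨x₁, hax₁, hx₁x⟩ := exists_between hx.1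
  obtain ⟨x₂, hxx₂, hx₂b⟩ := exists_between hx.2
  exact ((h x₁ x₂ hax₁ (hx₁x.trans hxx₂).le hx₂b).continuousAt
    (Icc_mem_nhds hx₁x hxx₂)).continuousWithinAt

theorem exp_neg_mul_tail_eq_pow (r : ℝ) (k j : ℕ) :
    Real.exp (-r * ((k : ℝ) + 1 + j)) = Real.exp (-r) ^ (j + (k + 1)) := by
  rw [← Real.exp_nat_mul]
  push_cast
  ring_nf

theorem tendsto_tsum_exp_neg_mul_tail (r : ℝ) :
    Tendsto (fun k : ℕ => ∑' j : ℕ, Real.exp (-r * ((k : ℝ) + 1 + j))) atTop (𝓝 0) := by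
  simp only [exp_neg_mul_tail_eq_pow]
  exact (tendsto_sum_nat_add fun j => Real.exp (-r) ^ j).comp (tendsto_add_atTop_nat 1)

section IndependentIncrements

variable {Ω α : Type*} [MeasurableSpace Ω] [MeasurableSpace α] [Countable α]
  [MeasurableSingletonClass α] {ν : Measure Ω} [IsProbabilityMeasure ν] {U : ℕ → Ω → α}

theorem measure_preimage_eq_tsum_prod (hU : ∀ i, Measurable (U i)) (hind : iIndepFun U ν)
    (n : ℕ) (S : Set (Fin n → α)) :
    ν ((fun ω (i : Fin n) => U i ω) ⁻¹' S)
      = ∑' v, S.indicator (fun v => ∏ i : Fin n, ν (U i ⁻¹' {v i})) v := by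
  have hV : Measurable fun ω (i : Fin n) => U i ω := measurable_pi_lambda _ fun i => hU i
  have hpi := (hind.precomp Fin.val_injective).map_fun_eq_pi_map
    fun i : Fin n => (hU i).aemeasurable
  have hS : MeasurableSet S := S.to_countable.measurableSet
  rw [← Measure.map_apply hV hS, ← Measure.tsum_indicator_apply_singleton _ S hS]
  simp_rw [hpi, Measure.pi_singleton, Measure.map_apply (hU _) (measurableSet_singleton _)]

theorem measureReal_preimage_eq_tsum_prod (hU : ∀ i, Measurable (U i)) (hind : iIndepFun U ν)
    {p : α → ℝ} (hp0 : 0 ≤ p) (hp : ∀ i a, ν (U i ⁻¹' {a}) = ENNReal.ofReal (p a))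
    (n : ℕ) (S : Set (Fin n → α)) :
    ν.real ((fun ω (i : Fin n) => U i ω) ⁻¹' S)
      = ∑' v, S.indicator (fun v => ∏ i, p (v i)) v := by
  have hterm : ∀ v, S.indicator (fun v => ∏ i : Fin n, ν (U i ⁻¹' {v i})) v
      = ENNReal.ofReal (S.indicator (fun v => ∏ i, p (v i)) v) := by
    intro v
    by_cases hv : v ∈ S
    · simp only [Set.indicator_of_mem hv, hp]
      exact (ENNReal.ofReal_prod_of_nonneg fun i _ => hp0 _).symm
    · simp [Set.indicator_of_notMem hv]
  rw [measureReal_def, measure_preimage_eq_tsum_prod hU hind, tsum_congr hterm,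
    ENNReal.tsum_toReal_eq fun _ => ENNReal.ofReal_ne_top]
  exact tsum_congr fun v => ENNReal.toReal_ofReal
    (Set.indicator_nonneg (fun v _ => Finset.prod_nonneg fun i _ => hp0 (v i)) v)

end IndependentIncrements

theorem measure_survival_sdiff_le {Ω : Type*} [MeasurableSpace Ω] (ν : Measure Ω)
    (X : ℕ → Ω → ℤ) (k : ℕ) :
    ν ({ω | ∀ i, 1 ≤ i → i ≤ k → 0 < X i ω} \ {ω | ∀ i, 1 ≤ i → 0 < X i ω})
      ≤ ∑' n, ν {ω | X (n + (k + 1)) ω ≤ 0} := by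
  refine (measure_mono ?_).trans (measure_iUnion_le _)
  rintro ω ⟨hsurvive, hexit⟩
  simp only [Set.mem_ofPred_eq, not_forall, not_lt] at hsurvive hexit
  obtain ⟨i, hi1, hi⟩ := hexit
  have hki : k + 1 ≤ i := by
    by_contra! hik
    exact (hsurvive i hi1 (by omega)).not_ge hi
  exact Set.mem_iUnion.mpr ⟨i - (k + 1), by rwa [Nat.sub_add_cancel hki]⟩

section IntegerIncrements

variable {Ω : Type*} [MeasurableSpace Ω] {ν : Measure Ω} [IsProbabilityMeasure ν]
  {U : ℕ → Ω → ℤ}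

theorem measure_sum_range_nonpos_le (hU : ∀ i, Measurable (U i)) (hind : iIndepFun U ν)
    {q : ℤ → ℝ≥0∞} (hq : ∀ i k, ν (U i ⁻¹' {k}) = q k) {θ : ℝ} (hθ : 0 ≤ θ) (n : ℕ) :
    ν {ω | ∑ i ∈ Finset.range n, U i ω ≤ 0}
      ≤ (∑' k : ℤ, ENNReal.ofReal (Real.exp (-θ * k)) * q k) ^ n := by
  have hevent : {ω | ∑ i ∈ Finset.range n, U i ω ≤ 0}
      = (fun ω (i : Fin n) => U i ω) ⁻¹' {v | ∑ i, v i ≤ 0} := by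
    ext ω
    simp [Fin.sum_univ_eq_sum_range (fun i => U i ω)]
  rw [hevent, measure_preimage_eq_tsum_prod hU hind, ← ENNReal.tsum_fin_prod_eq_pow]
  refine ENNReal.tsum_le_tsum fun v => Set.indicator_apply_le' (fun hv => ?_) fun _ => zero_le
  simp only [hq, Finset.prod_mul_distrib]
  refine le_mul_of_one_le_left zero_le ?_
  have hsum : (∑ i, (v i : ℝ)) ≤ 0 := by exact_mod_cast hv
  rw [← ENNReal.ofReal_prod_of_nonneg fun i _ => (Real.exp_pos _).le, ← Real.exp_sum,
    ← Finset.mul_sum, ENNReal.one_le_ofReal]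
  exact Real.one_le_exp (by nlinarith)

theorem survival_sub_escape_le (hU : ∀ i, Measurable (U i)) (hind : iIndepFun U ν)
    {p : ℤ → ℝ} (hp0 : 0 ≤ p) (hp : ∀ i k, ν (U i ⁻¹' {k}) = ENNReal.ofReal (p k))
    {θ r : ℝ} (hθ : 0 ≤ θ) (hr : 0 < r) (hsum : Summable fun k : ℤ => Real.exp (-θ * k) * p k)
    (hmoment : ∑' k : ℤ, Real.exp (-θ * k) * p k ≤ Real.exp (-r)) (k : ℕ) :
    0 ≤ ν.real {ω | ∀ i, 1 ≤ i → i ≤ k → 0 < ∑ j ∈ Finset.range i, U j ω}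
        - ν.real {ω | ∀ i, 1 ≤ i → 0 < ∑ j ∈ Finset.range i, U j ω} ∧
      ν.real {ω | ∀ i, 1 ≤ i → i ≤ k → 0 < ∑ j ∈ Finset.range i, U j ω}
        - ν.real {ω | ∀ i, 1 ≤ i → 0 < ∑ j ∈ Finset.range i, U j ω}
        ≤ ∑' j : ℕ, Real.exp (-r * ((k : ℝ) + 1 + j)) := by
  have hescape : MeasurableSet {ω | ∀ i, 1 ≤ i → 0 < ∑ j ∈ Finset.range i, U j ω} := by
    simp only [Set.ofPred_forall]
    exact .iInter fun i => .iInter fun _ =>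
      Finset.measurable_sum _ (fun j _ => hU j) MeasurableSet.of_discrete
  have hmoment_ofReal : ∑' k : ℤ, ENNReal.ofReal (Real.exp (-θ * k)) * ENNReal.ofReal (p k)
      ≤ ENNReal.ofReal (Real.exp (-r)) := by
    simp_rw [← ENNReal.ofReal_mul (Real.exp_pos _).le]
    rw [← ENNReal.ofReal_tsum_of_nonneg (fun k => mul_nonneg (Real.exp_pos _).le (hp0 k)) hsum]
    exact ENNReal.ofReal_le_ofReal hmoment
  rw [← measureReal_sdiff (fun ω h i hi _ => by exact h i hi) hescape]
  refine ⟨measureReal_nonneg,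
    ENNReal.toReal_le_of_le_ofReal (tsum_nonneg fun _ => by positivity) ?_⟩
  have hsummable : Summable fun j : ℕ => Real.exp (-r * ((k : ℝ) + 1 + j)) := by
    simp only [exp_neg_mul_tail_eq_pow]
    exact (summable_nat_add_iff (k + 1)).mpr
      (summable_geometric_of_lt_one (Real.exp_pos _).le (Real.exp_lt_one_iff.mpr (by linarith)))
  calc _ ≤ ∑' n, ν {ω | ∑ j ∈ Finset.range (n + (k + 1)), U j ω ≤ 0} :=
        measure_survival_sdiff_le ν (fun i ω => ∑ j ∈ Finset.range i, U j ω) k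
    _ ≤ ∑' n : ℕ, ENNReal.ofReal (Real.exp (-r * ((k : ℝ) + 1 + n))) := by
        refine ENNReal.tsum_le_tsum fun n => (measure_sum_range_nonpos_le hU hind hp hθ _).trans ?_
        rw [exp_neg_mul_tail_eq_pow, ENNReal.ofReal_pow (Real.exp_pos _).le]
        exact pow_le_pow_left' hmoment_ofReal _
    _ = _ := (ENNReal.ofReal_tsum_of_nonneg (fun _ => by positivity) hsummable).symm

end IntegerIncrements

/-- With `b = β / 2` and `c` the normalising constant of the discrete Laplace law
`P_β(k) = e^{-b|k|} / c`, `tiltedMass b c` is its moment generating function `e^{L}` and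
`tiltedLaw b c x` is the tilted law `P̃_x`. -/
noncomputable def tiltedMass (b c a : ℝ) : ℝ :=
  ∑' k : ℤ, Real.exp (a * k) * Real.exp (-b * |(k : ℝ)|) / c

noncomputable def tiltedLaw (b c x : ℝ) (k : ℤ) : ℝ :=
  Real.exp (x * k - Real.log (tiltedMass b c x)) * (Real.exp (-b * |(k : ℝ)|) / c)

theorem summable_exp_mul_abs {t : ℝ} (ht : t < 0) :
    Summable fun k : ℤ => Real.exp (t * |(k : ℝ)|) := by
  have hgeo : Summable fun n : ℕ => Real.exp t ^ n :=
    summable_geometric_of_lt_one (Real.exp_pos t).le (Real.exp_lt_one_iff.mpr ht)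
  refine Summable.of_nat_of_neg (hgeo.congr fun n => ?_) (hgeo.congr fun n => ?_) <;>
    simp [← Real.exp_nat_mul, mul_comm]

theorem exp_mul_mul_exp_le {a b m : ℝ} (ha : |a| ≤ m) (k : ℤ) :
    Real.exp (a * k) * Real.exp (-b * |(k : ℝ)|) ≤ Real.exp ((m - b) * |(k : ℝ)|) := by
  rw [← Real.exp_add, Real.exp_le_exp]
  have : a * k ≤ m * |(k : ℝ)| :=
    (le_abs_self _).trans (by rw [abs_mul]; exact mul_le_mul_of_nonneg_right ha (abs_nonneg _))
  linarith

section TiltedMass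

variable {a b c : ℝ}

theorem summable_tiltedMass (c : ℝ) (hab : |a| < b) :
    Summable fun k : ℤ => Real.exp (a * k) * Real.exp (-b * |(k : ℝ)|) / c :=
  ((summable_exp_mul_abs (t := |a| - b) (by linarith)).of_nonneg_of_le (fun _ => by positivity)
    (exp_mul_mul_exp_le le_rfl)).div_const c

theorem inv_le_tiltedMass (hab : |a| < b) (hc : 0 < c) : c⁻¹ ≤ tiltedMass b c a := by
  simpa [tiltedMass] using (summable_tiltedMass c hab).le_tsum 0 fun _ _ => by positivity

theorem tiltedMass_pos (hab : |a| < b) (hc : 0 < c) : 0 < tiltedMass b c a :=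
  (inv_pos.mpr hc).trans_le (inv_le_tiltedMass hab hc)

theorem tiltedMass_neg (b c a : ℝ) : tiltedMass b c (-a) = tiltedMass b c a := by
  rw [tiltedMass, ← (Equiv.neg ℤ).tsum_eq]
  simp [tiltedMass]

theorem tiltedMass_eq_tsum_cosh (hab : |a| < b) :
    tiltedMass b c a = ∑' k : ℤ, Real.cosh (a * k) * (Real.exp (-b * |(k : ℝ)|) / c) := by
  have hneg : |-a| < b := by rwa [abs_neg]
  calc tiltedMass b c a = (tiltedMass b c (-a) + tiltedMass b c a) / 2 := by
        rw [tiltedMass_neg]; ring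
    _ = _ := by
        rw [tiltedMass, tiltedMass,
          ← (summable_tiltedMass c hneg).tsum_add (summable_tiltedMass c hab), ← tsum_div_const]
        refine tsum_congr fun k => ?_
        rw [Real.cosh_eq, neg_mul]
        ring

theorem tiltedMass_lt_tiltedMass {a₁ a₂ : ℝ} (h₁ : 0 ≤ a₁) (h₁₂ : a₁ < a₂) (h₂ : a₂ < b)
    (hc : 0 < c) : tiltedMass b c a₁ < tiltedMass b c a₂ := by
  have habs₁ : |a₁| < b := by rw [abs_of_nonneg h₁]; linarith
  have habs₂ : |a₂| < b := by rw [abs_of_nonneg (by linarith)]; linarith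
  have hcosh (a : ℝ) (ha : |a| < b) :
      Summable fun k : ℤ => Real.cosh (a * k) * (Real.exp (-b * |(k : ℝ)|) / c) := by
    refine ((summable_tiltedMass c ha).add (summable_tiltedMass c (by rwa [abs_neg]))).div_const 2
      |>.congr fun k => ?_
    rw [Real.cosh_eq, ← neg_mul]
    ring
  rw [tiltedMass_eq_tsum_cosh habs₁, tiltedMass_eq_tsum_cosh habs₂]
  refine (hcosh a₁ habs₁).tsum_lt_tsum (i := 1) (fun k => ?_) ?_ (hcosh a₂ habs₂)
  · gcongr
    rw [Real.cosh_le_cosh, abs_mul, abs_mul]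
    gcongr
  · gcongr
    rw [Real.cosh_lt_cosh]
    simpa [abs_of_nonneg h₁, abs_of_nonneg (h₁.trans h₁₂.le)]

theorem continuousOn_tiltedMass {m : ℝ} (hm : m < b) (hc : 0 < c) :
    ContinuousOn (tiltedMass b c) (Icc (-m) m) := by
  refine continuousOn_tsum (fun k => by fun_prop)
    ((summable_exp_mul_abs (t := m - b) (by linarith)).div_const c) fun k a ha => ?_
  rw [Real.norm_of_nonneg (by positivity)]
  gcongr
  exact exp_mul_mul_exp_le (abs_le.mpr ha) k

end TiltedMass

section TiltedLaw

variable {b c x : ℝ}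

theorem tiltedLaw_eq (hx : |x| < b) (hc : 0 < c) (k : ℤ) :
    tiltedLaw b c x k
      = Real.exp (x * k) * Real.exp (-b * |(k : ℝ)|) / c / tiltedMass b c x := by
  rw [tiltedLaw, Real.exp_sub, Real.exp_log (tiltedMass_pos hx hc)]
  ring

theorem tiltedLaw_nonneg (hc : 0 ≤ c) (k : ℤ) : 0 ≤ tiltedLaw b c x k := by
  unfold tiltedLaw
  positivity

theorem tiltedLaw_le {m : ℝ} (hx : |x| ≤ m) (hm : m < b) (hc : 0 < c) (k : ℤ) :
    tiltedLaw b c x k ≤ Real.exp ((m - b) * |(k : ℝ)|) := by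
  have hx' : |x| < b := hx.trans_lt hm
  have hmass : 1 ≤ c * tiltedMass b c x := by
    simpa [hc.ne'] using mul_le_mul_of_nonneg_left (inv_le_tiltedMass hx' hc) hc.le
  rw [tiltedLaw_eq hx' hc, div_div, div_le_iff₀ (by positivity)]
  exact (exp_mul_mul_exp_le hx k).trans (le_mul_of_one_le_right (by positivity) hmass)

theorem summable_exp_neg_mul_tiltedLaw {θ : ℝ} (hx : |x| < b) (hxθ : |x - θ| < b) (hc : 0 < c) :
    Summable fun k : ℤ => Real.exp (-θ * k) * tiltedLaw b c x k := by
  refine ((summable_tiltedMass c hxθ).div_const (tiltedMass b c x)).congr fun k => ?_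
  rw [tiltedLaw_eq hx hc, sub_mul, sub_eq_add_neg, Real.exp_add, ← neg_mul]
  ring

theorem continuousOn_tiltedLaw {m : ℝ} (hm : m < b) (hc : 0 < c) (k : ℤ) :
    ContinuousOn (fun x => tiltedLaw b c x k) (Icc (-m) m) := by
  have hlog : ContinuousOn (fun x => Real.log (tiltedMass b c x)) (Icc (-m) m) :=
    (continuousOn_tiltedMass hm hc).log fun x hx =>
      (tiltedMass_pos ((abs_le.mpr hx).trans_lt hm) hc).ne'
  unfold tiltedLaw
  fun_prop

theorem tsum_exp_neg_mul_tiltedLaw {θ : ℝ} (hx : |x| < b) (hc : 0 < c) :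
    ∑' k : ℤ, Real.exp (-θ * k) * tiltedLaw b c x k
      = tiltedMass b c (x - θ) / tiltedMass b c x := by
  simp_rw [tiltedLaw_eq hx hc, tiltedMass, ← tsum_div_const]
  refine tsum_congr fun k => ?_
  rw [sub_mul, sub_eq_add_neg, Real.exp_add, ← neg_mul]
  ring

theorem exists_tsum_exp_neg_mul_tiltedLaw_le {x₁ x₂ : ℝ} (hx₁ : 0 < x₁) (h₁₂ : x₁ ≤ x₂)
    (hx₂ : x₂ < b) (hc : 0 < c) :
    ∃ r > 0, ∀ x ∈ Icc x₁ x₂,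
      ∑' k : ℤ, Real.exp (-x₁ * k) * tiltedLaw b c x k ≤ Real.exp (-r) := by
  have habs : ∀ x ∈ Icc x₁ x₂, |x| < b ∧ |x - x₁| < b := fun x hx => by
    constructor <;> rw [abs_lt] <;> constructor <;> linarith [hx.1, hx.2]
  have hcont : ContinuousOn (fun x => tiltedMass b c (x - x₁) / tiltedMass b c x) (Icc x₁ x₂) := by
    refine ContinuousOn.div ?_ ?_ fun x hx => (tiltedMass_pos (habs x hx).1 hc).ne'
    · exact (continuousOn_tiltedMass hx₂ hc).comp (by fun_prop) fun x hx =>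
        ⟨by linarith [hx.1], by linarith [hx.2]⟩
    · exact (continuousOn_tiltedMass hx₂ hc).mono fun x hx => ⟨by linarith [hx.1], hx.2⟩
  obtain ⟨z, hz, hmax⟩ := isCompact_Icc.exists_isMaxOn (nonempty_Icc.mpr h₁₂) hcont
  have hpos : 0 < tiltedMass b c (z - x₁) / tiltedMass b c z :=
    div_pos (tiltedMass_pos (habs z hz).2 hc) (tiltedMass_pos (habs z hz).1 hc)
  have hlt : tiltedMass b c (z - x₁) / tiltedMass b c z < 1 :=
    (div_lt_one (tiltedMass_pos (habs z hz).1 hc)).mpr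
      (tiltedMass_lt_tiltedMass (by linarith [hz.1]) (by linarith) (by linarith [hz.2]) hc)
  refine ⟨-Real.log _, neg_pos.mpr (Real.log_neg hpos hlt), fun x hx => ?_⟩
  rw [neg_neg, Real.exp_log hpos, tsum_exp_neg_mul_tiltedLaw (habs x hx).1 hc]
  exact hmax hx

end TiltedLaw

section TiltedWalk

variable {Ω : Type*} [MeasurableSpace Ω] {μ : ℝ → Measure Ω} {U : ℕ → Ω → ℤ} {b c x₁ x₂ : ℝ}

theorem exists_survival_sub_escape_le (hc : 0 < c) (hx₁ : 0 < x₁) (h₁₂ : x₁ ≤ x₂)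
    (hx₂ : x₂ < b) (hprob : ∀ x ∈ Ioo 0 b, IsProbabilityMeasure (μ x))
    (hU : ∀ i, Measurable (U i)) (hindep : ∀ x ∈ Ioo 0 b, iIndepFun U (μ x))
    (hlaw : ∀ x ∈ Ioo 0 b, ∀ i k, μ x {ω | U i ω = k} = ENNReal.ofReal (tiltedLaw b c x k)) :
    ∃ r > 0, ∀ x ∈ Icc x₁ x₂, ∀ k : ℕ,
      0 ≤ (μ x {ω | ∀ i, 1 ≤ i → i ≤ k → 0 < ∑ j ∈ Finset.range i, U j ω}).toReal
          - (μ x {ω | ∀ i, 1 ≤ i → 0 < ∑ j ∈ Finset.range i, U j ω}).toReal ∧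
        (μ x {ω | ∀ i, 1 ≤ i → i ≤ k → 0 < ∑ j ∈ Finset.range i, U j ω}).toReal
          - (μ x {ω | ∀ i, 1 ≤ i → 0 < ∑ j ∈ Finset.range i, U j ω}).toReal
          ≤ ∑' j : ℕ, Real.exp (-r * ((k : ℝ) + 1 + j)) := by
  obtain ⟨r, hr, hmoment⟩ := exists_tsum_exp_neg_mul_tiltedLaw_le hx₁ h₁₂ hx₂ hc
  refine ⟨r, hr, fun x hx k => ?_⟩
  have hx' : x ∈ Ioo 0 b := Icc_subset_Ioo hx₁ hx₂ hx
  have := hprob x hx'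
  have hsum : Summable fun k : ℤ => Real.exp (-x₁ * k) * tiltedLaw b c x k :=
    summable_exp_neg_mul_tiltedLaw (abs_lt.mpr ⟨by linarith [hx.1], by linarith [hx.2]⟩)
      (abs_lt.mpr ⟨by linarith [hx.1], by linarith [hx.2]⟩) hc
  exact survival_sub_escape_le hU (hindep x hx') (fun k => tiltedLaw_nonneg hc.le k) (hlaw x hx')
    hx₁.le hr hsum (hmoment x hx) k

theorem continuousOn_survival (hc : 0 < c) (hx₁ : 0 < x₁) (hx₂ : x₂ < b)
    (hprob : ∀ x ∈ Ioo 0 b, IsProbabilityMeasure (μ x))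
    (hU : ∀ i, Measurable (U i)) (hindep : ∀ x ∈ Ioo 0 b, iIndepFun U (μ x))
    (hlaw : ∀ x ∈ Ioo 0 b, ∀ i k, μ x {ω | U i ω = k} = ENNReal.ofReal (tiltedLaw b c x k))
    (k : ℕ) :
    ContinuousOn (fun x => (μ x {ω | ∀ i, 1 ≤ i → i ≤ k → 0 < ∑ j ∈ Finset.range i, U j ω}).toReal)
      (Icc x₁ x₂) := by
  have hsub : Icc x₁ x₂ ⊆ Icc (-x₂) x₂ := fun x hx => ⟨by linarith [hx.1, hx.2], hx.2⟩
  obtain ⟨S, hS⟩ : ∃ S : Set (Fin k → ℤ),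
      {ω | ∀ i, 1 ≤ i → i ≤ k → 0 < ∑ j ∈ Finset.range i, U j ω}
        = (fun ω (j : Fin k) => U j ω) ⁻¹' S := by
    refine ⟨{v | ∀ i, 1 ≤ i → (hik : i ≤ k) → 0 < ∑ j : Fin i, v (Fin.castLE hik j)}, ?_⟩
    ext ω
    simp [Fin.sum_univ_eq_sum_range (fun j => U j ω)]
  refine (continuousOn_tsum_indicator_prod (fun k => (continuousOn_tiltedLaw hx₂ hc k).mono hsub)
    (fun x _ k => tiltedLaw_nonneg hc.le k)
    (fun x hx k => tiltedLaw_le (abs_le.mpr (hsub hx)) hx₂ hc k)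
    (fun k => (Real.exp_pos _).le) (summable_exp_mul_abs (by linarith)) S).congr fun x hx => ?_
  have hx' : x ∈ Ioo 0 b := Icc_subset_Ioo hx₁ hx₂ hx
  have := hprob x hx'
  rw [hS]
  exact measureReal_preimage_eq_tsum_prod hU (hindep x hx') (fun k => tiltedLaw_nonneg hc.le k)
    (hlaw x hx') k S

end TiltedWalk

/-- Uniform convergence of finite-horizon survival probabilities to the escape
probability `κ(x)` for the walk with i.i.d. tilted increments `P̃_x`, with a uniform
geometric error bound on compact subsets `[x₁,x₂] ⊂ (0, β/2)`; consequently `κ` is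
continuous on `(0, β/2)`. -/
theorem kappa_uniform_convergence (β : ℝ) (hβ : 0 < β)
    (c : ℝ) (hc : c = ∑' k : ℤ, Real.exp (-(β / 2) * |(k : ℝ)|))
    (L : ℝ → ℝ)
    (hL : ∀ h : ℝ, L h =
      Real.log (∑' k : ℤ, Real.exp (h * k) * Real.exp (-(β / 2) * |(k : ℝ)|) / c))
    {Ω : Type*} [MeasurableSpace Ω] (μ : ℝ → Measure Ω)
    (hprob : ∀ x ∈ Ioo (0:ℝ) (β / 2), IsProbabilityMeasure (μ x))
    (U : ℕ → Ω → ℤ) (hmeas : ∀ i, Measurable (U i))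
    (hindep : ∀ x ∈ Ioo (0:ℝ) (β / 2), iIndepFun U (μ x))
    (hlaw : ∀ x ∈ Ioo (0:ℝ) (β / 2), ∀ i : ℕ, ∀ k : ℤ,
      μ x {ω | U i ω = k} =
        ENNReal.ofReal (Real.exp (x * k - L x) * (Real.exp (-(β / 2) * |(k : ℝ)|) / c)))
    (X : ℕ → Ω → ℤ) (hX : ∀ n ω, X n ω = ∑ i ∈ Finset.range n, U i ω)
    (P : ℕ → ℝ → ℝ)
    (hP : ∀ k : ℕ, ∀ x : ℝ,
      P k x = (μ x {ω | ∀ i : ℕ, 1 ≤ i → i ≤ k → 0 < X i ω}).toReal)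
    (κ : ℝ → ℝ)
    (hκ : ∀ x : ℝ, κ x = (μ x {ω | ∀ i : ℕ, 1 ≤ i → 0 < X i ω}).toReal) :
    (∀ x₁ x₂ : ℝ, 0 < x₁ → x₁ ≤ x₂ → x₂ < β / 2 →
      (∃ r > 0, ∀ x ∈ Icc x₁ x₂, ∀ k : ℕ,
        0 ≤ P k x - κ x ∧
        P k x - κ x ≤ ∑' j : ℕ, Real.exp (-r * ((k : ℝ) + 1 + j))) ∧
      TendstoUniformlyOn (fun k x => P k x) κ atTop (Icc x₁ x₂)) ∧
    ContinuousOn κ (Ioo (0:ℝ) (β / 2)) := by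
  obtain rfl : L = fun h => Real.log (tiltedMass (β / 2) c h) := funext hL
  simp only [hX] at hP hκ
  have hc0 : 0 < c := hc ▸ (summable_exp_mul_abs (by linarith)).tsum_pos
    (fun _ => (Real.exp_pos _).le) 0 (Real.exp_pos _)
  have hbound : ∀ x₁ x₂, 0 < x₁ → x₁ ≤ x₂ → x₂ < β / 2 → ∃ r > 0, ∀ x ∈ Icc x₁ x₂, ∀ k : ℕ,
      0 ≤ P k x - κ x ∧ P k x - κ x ≤ ∑' j : ℕ, Real.exp (-r * ((k : ℝ) + 1 + j)) :=
    fun x₁ x₂ hx₁ h₁₂ hx₂ => by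
      simpa only [hP, hκ] using
        exists_survival_sub_escape_le hc0 hx₁ h₁₂ hx₂ hprob hmeas hindep hlaw
  have hunif : ∀ x₁ x₂, 0 < x₁ → x₁ ≤ x₂ → x₂ < β / 2 →
      TendstoUniformlyOn (fun k x => P k x) κ atTop (Icc x₁ x₂) := fun x₁ x₂ hx₁ h₁₂ hx₂ =>
    have ⟨r, _, hr⟩ := hbound x₁ x₂ hx₁ h₁₂ hx₂
    tendstoUniformlyOn_of_sub_le (tendsto_tsum_exp_neg_mul_tail r) hr
  refine ⟨fun x₁ x₂ hx₁ h₁₂ hx₂ => ⟨hbound x₁ x₂ hx₁ h₁₂ hx₂, hunif x₁ x₂ hx₁ h₁₂ hx₂⟩,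
    continuousOn_Ioo_of_forall_Icc fun x₁ x₂ hx₁ h₁₂ hx₂ =>
      (hunif x₁ x₂ hx₁ h₁₂ hx₂).continuousOn (Eventually.of_forall fun k => ?_).frequently⟩
  exact (continuousOn_survival hc0 hx₁ hx₂ hprob hmeas hindep hlaw k).congr fun x _ => hP k x
end

section
/- (Concentration around the maximizer) Let f : [a_1, a_2] → ℝ be C², strictly concave with unique maximizer a* in the interior and f''(a*) < 0. Then Σ_{n = -R L^{1/4}}^{R L^{1/4}} exp( √L · f(a* + n/√L) ) ~ L^{1/4} e^{f(a*)√L} ∫_{-R}^{R} e^{f''(a*) x²/2} dx as L → ∞, for each fixed R > 0. -/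
open Set Filter MeasureTheory Asymptotics Topology

/-!
Put `M = L^{1/4}`, so that `√L = M²`. After factoring out `e^{f(a*)√L}`, the sum divided by `M`
is the integral of the step function equal to `exp (M² (f (a* + n/M²) - f a*))` on
`[n/M, (n+1)/M)` for `|n| ≤ R M`. As `a*` is a critical point, the Peano form of Taylor's theorem
gives `M² (f (a* + y/M) - f a*) → f''(a*) x²/2` whenever `y → x`, so these step functions converge
to `exp (f''(a*) x²/2)` on `(-R, R)` and to `0` off `[-R, R]`. They are bounded by `1` on
`[-R-1, R+1]` because `a*` is a local maximum, and dominated convergence gives the result.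
-/

theorem taylor_isLittleO_sq_of_deriv_eq_zero {f : ℝ → ℝ} {a : ℝ}
    (hf : ∀ᶠ x in 𝓝 a, DifferentiableAt ℝ f x) (hf' : DifferentiableAt ℝ (deriv f) a)
    (hcrit : deriv f a = 0) :
    (fun x => f x - f a - deriv (deriv f) a / 2 * (x - a) ^ 2) =o[𝓝 a] fun x => (x - a) ^ 2 := by
  set c := deriv (deriv f) a
  obtain ⟨ε, hε, hball⟩ := Metric.eventually_nhds_iff_ball.1 hf
  have hderiv : ∀ x ∈ Metric.ball a ε, HasDerivWithinAt (fun x => f x - c / 2 * (x - a) ^ 2)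
      (deriv f x - c * (x - a)) (Metric.ball a ε) x := by
    intro x hx
    have hsq : HasDerivAt (fun x => c / 2 * (x - a) ^ 2) (c * (x - a)) x :=
      ((((hasDerivAt_id' x).sub_const a).fun_pow 2).const_mul (c / 2)).congr_deriv (by ring)
    exact ((hball x hx).hasDerivAt.sub hsq).hasDerivWithinAt
  have hlin : (fun x => deriv f x - c * (x - a)) =o[𝓝[Metric.ball a ε] a] fun x => (x - a) ^ 1 := by
    simpa [hcrit, mul_comm] using (hf'.hasDerivAt.isLittleO).mono nhdsWithin_le_nhds
  have := (convex_ball a ε).isLittleO_pow_succ_real (Metric.mem_ball_self hε) hderiv hlin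
  rw [nhdsWithin_eq_nhds.2 (Metric.ball_mem_nhds a hε)] at this
  simpa [sub_right_comm] using this

theorem tendsto_sq_mul_sub_of_deriv_eq_zero {f : ℝ → ℝ} {a x : ℝ}
    (hf : ∀ᶠ x in 𝓝 a, DifferentiableAt ℝ f x) (hf' : DifferentiableAt ℝ (deriv f) a)
    (hcrit : deriv f a = 0) {ι : Type*} {l : Filter ι} {M y : ι → ℝ}
    (hM : Tendsto M l atTop) (hy : Tendsto y l (𝓝 x)) :
    Tendsto (fun i => M i ^ 2 * (f (a + y i / M i) - f a)) l
      (𝓝 (deriv (deriv f) a / 2 * x ^ 2)) := by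
  set c := deriv (deriv f) a
  have hpt : Tendsto (fun i => a + y i / M i) l (𝓝 a) := by
    simpa using tendsto_const_nhds.add (hy.div_atTop hM)
  have hMne : ∀ᶠ i in l, M i ≠ 0 := hM.eventually_ne_atTop 0
  have hrem : Tendsto (fun i => M i ^ 2 * (f (a + y i / M i) - f a - c / 2 * (y i / M i) ^ 2))
      l (𝓝 0) := by
    have h := (isBigO_refl (fun i => M i ^ 2) l).mul_isLittleO
      ((taylor_isLittleO_sq_of_deriv_eq_zero hf hf' hcrit).comp_tendsto hpt)
    simp only [Function.comp_def, add_sub_cancel_left] at h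
    refine (isLittleO_one_iff ℝ).1 ((h.congr' .rfl ?_).trans_isBigO ((hy.pow 2).isBigO_one ℝ))
    filter_upwards [hMne] with i hi
    simp [field]
  have h := hrem.add ((hy.pow 2).const_mul (c / 2))
  rw [zero_add] at h
  refine h.congr' ?_
  filter_upwards [hMne] with i hi
  field_simp
  ring

theorem indicator_floor_eq_sum (s : Finset ℤ) (a : ℤ → ℝ) (x : ℝ) :
    (s : Set ℤ).indicator a ⌊x⌋ = ∑ n ∈ s, (Ico (n : ℝ) (n + 1)).indicator (fun _ => a n) x := by
  simp only [indicator_apply, mem_Ico, ← Int.floor_eq_iff, Finset.sum_ite_eq, Finset.mem_coe]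

theorem integral_indicator_floor (s : Finset ℤ) (a : ℤ → ℝ) :
    ∫ x : ℝ, (s : Set ℤ).indicator a ⌊x⌋ = ∑ n ∈ s, a n := by
  simp_rw [indicator_floor_eq_sum]
  rw [integral_finsetSum _ fun n _ =>
    (integrable_indicator_iff measurableSet_Ico).2 (integrableOn_const measure_Ico_lt_top.ne)]
  simp [integral_indicator_const _ measurableSet_Ico]

theorem integral_indicator_floor_mul (s : Finset ℤ) (a : ℤ → ℝ) {M : ℝ} (hM : 0 < M) :
    ∫ x, (s : Set ℤ).indicator a ⌊x * M⌋ = (∑ n ∈ s, a n) / M := by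
  rw [Measure.integral_comp_mul_right (fun x => (s : Set ℤ).indicator a ⌊x⌋),
    integral_indicator_floor, abs_of_pos (inv_pos.2 hM), smul_eq_mul, inv_mul_eq_div]

theorem floor_mul_div_mem_Ioc (x : ℝ) {M : ℝ} (hM : 0 < M) :
    (⌊x * M⌋ : ℝ) / M ∈ Ioc (x - M⁻¹) x := by
  rw [mem_Ioc, lt_div_iff₀ hM, div_le_iff₀ hM, sub_mul, inv_mul_cancel₀ hM.ne']
  exact ⟨Int.sub_one_lt_floor _, Int.floor_le _⟩

theorem tendsto_floor_mul_div {ι : Type*} {l : Filter ι} {M : ι → ℝ}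
    (hM : Tendsto M l atTop) (x : ℝ) : Tendsto (fun i => (⌊x * M i⌋ : ℝ) / M i) l (𝓝 x) := by
  have hlow : Tendsto (fun i => x - (M i)⁻¹) l (𝓝 x) := by
    simpa using tendsto_const_nhds.sub hM.inv_tendsto_atTop
  have hmem : ∀ᶠ i in l, (⌊x * M i⌋ : ℝ) / M i ∈ Ioc (x - (M i)⁻¹) x :=
    (hM.eventually_gt_atTop 0).mono fun i hi => floor_mul_div_mem_Ioc x hi
  exact tendsto_of_tendsto_of_tendsto_of_le_of_le' hlow tendsto_const_nhds
    (hmem.mono fun _ h => h.1.le) (hmem.mono fun _ h => h.2)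

theorem mem_Icc_neg_floor_iff {r : ℝ} {n : ℤ} : n ∈ Finset.Icc (-⌊r⌋) ⌊r⌋ ↔ |(n : ℝ)| ≤ r := by
  rw [Finset.mem_Icc, neg_le, Int.le_floor, Int.le_floor, abs_le, neg_le]
  push_cast
  rfl

theorem eventually_abs_floor_mul_le_iff {ι : Type*} {l : Filter ι} {M : ι → ℝ}
    (hM : Tendsto M l atTop) {x R : ℝ} (hx : |x| ≠ R) :
    ∀ᶠ i in l, (|(⌊x * M i⌋ : ℝ)| ≤ R * M i ↔ |x| < R) := by
  have habs := (tendsto_floor_mul_div hM x).abs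
  rcases hx.lt_or_gt with hlt | hgt
  · filter_upwards [hM.eventually_gt_atTop 0, habs.eventually (eventually_lt_nhds hlt)]
      with i hi h
    rw [abs_div, abs_of_pos hi, div_lt_iff₀ hi] at h
    exact iff_of_true h.le hlt
  · filter_upwards [hM.eventually_gt_atTop 0, habs.eventually (eventually_gt_nhds hgt)]
      with i hi h
    rw [abs_div, abs_of_pos hi, lt_div_iff₀ hi] at h
    exact iff_of_false h.not_ge hgt.not_gt

theorem mem_Icc_of_abs_floor_mul_le {x R M : ℝ} (hM : 1 ≤ M)
    (h : |(⌊x * M⌋ : ℝ)| ≤ R * M) : x ∈ Icc (-(R + 1)) (R + 1) := by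
  have hM0 : 0 < M := one_pos.trans_le hM
  obtain ⟨hlow, hhigh⟩ := floor_mul_div_mem_Ioc x hM0
  have hle : |(⌊x * M⌋ : ℝ) / M| ≤ R := by rwa [abs_div, abs_of_pos hM0, div_le_iff₀ hM0]
  have hinv : M⁻¹ ≤ 1 := inv_le_one_of_one_le₀ hM
  obtain ⟨h1, h2⟩ := abs_le.1 hle
  constructor <;> linarith

theorem tendsto_sum_Icc_floor_div {ι : Type*} {l : Filter ι} [l.IsCountablyGenerated]
    {M : ι → ℝ} (hM : Tendsto M l atTop) {R B : ℝ} (hR : 0 ≤ R) {u : ι → ℤ → ℝ} {φ : ℝ → ℝ}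
    (hbound : ∀ᶠ i in l, ∀ n : ℤ, |(n : ℝ)| ≤ R * M i → ‖u i n‖ ≤ B)
    (hlim : ∀ x, |x| < R → Tendsto (fun i => u i ⌊x * M i⌋) l (𝓝 (φ x))) :
    Tendsto (fun i => (∑ n ∈ Finset.Icc (-⌊R * M i⌋) ⌊R * M i⌋, u i n) / M i) l
      (𝓝 (∫ x in -R..R, φ x)) := by
  set s := fun i => Finset.Icc (-⌊R * M i⌋) ⌊R * M i⌋
  have hint : ∀ᶠ i in l, ∫ x, (s i : Set ℤ).indicator (u i) ⌊x * M i⌋ = (∑ n ∈ s i, u i n) / M i :=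
    (hM.eventually_gt_atTop 0).mono fun i hi => integral_indicator_floor_mul _ _ hi
  have hφ : ∫ x in -R..R, φ x = ∫ x, (Ioo (-R) R).indicator φ x := by
    rw [integral_indicator measurableSet_Ioo, intervalIntegral.integral_of_le (by linarith),
      integral_Ioc_eq_integral_Ioo]
  rw [hφ]
  refine Tendsto.congr' hint (tendsto_integral_filter_of_dominated_convergence
    ((Icc (-(R + 1)) (R + 1)).indicator fun _ => B) ?_ ?_ ?_ ?_)
  · exact Eventually.of_forall fun i =>
      ((measurable_of_countable ((s i : Set ℤ).indicator (u i))).comp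
        (Int.measurable_floor.comp (measurable_mul_const (M i)))).aestronglyMeasurable
  · filter_upwards [hbound, hM.eventually_ge_atTop 1] with i hB hM1
    refine ae_of_all _ fun x => ?_
    -- the index `0` is always admissible
    have hB0 : 0 ≤ B := (norm_nonneg _).trans (hB 0 (by simp; positivity))
    by_cases hx : ⌊x * M i⌋ ∈ s i
    · have hx' := mem_Icc_neg_floor_iff.1 hx
      rw [indicator_of_mem (Finset.mem_coe.2 hx),
        indicator_of_mem (mem_Icc_of_abs_floor_mul_le hM1 hx')]
      exact hB _ hx'
    · rw [indicator_of_notMem (mt Finset.mem_coe.1 hx), norm_zero]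
      exact indicator_nonneg (fun _ _ => hB0) x
  · exact (integrable_indicator_iff measurableSet_Icc).2 (integrableOn_const measure_Icc_lt_top.ne)
  · have hR' : ∀ᵐ x ∂volume, |x| ≠ R := by
      refine ((Set.toFinite {R, -R}).countable.ae_notMem volume).mono fun x hx h => hx ?_
      rcases (abs_eq hR).1 h with rfl | rfl <;> simp
    filter_upwards [hR'] with x hx
    have hev := eventually_abs_floor_mul_le_iff hM hx
    by_cases hxR : |x| < R
    · rw [indicator_of_mem (show x ∈ Ioo (-R) R from abs_lt.1 hxR)]
      refine (hlim x hxR).congr' (hev.mono fun i hi => ?_)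
      exact (indicator_of_mem (Finset.mem_coe.2 (mem_Icc_neg_floor_iff.2 (hi.2 hxR))) _).symm
    · rw [indicator_of_notMem (show x ∉ Ioo (-R) R from fun h => hxR (abs_lt.2 h))]
      refine tendsto_const_nhds.congr' (hev.mono fun i hi => ?_)
      exact (indicator_of_notMem (fun h => hxR (hi.1 (mem_Icc_neg_floor_iff.1 h))) _).symm

theorem IsLocalMax.eventually_sq_mul_sub_nonpos {f : ℝ → ℝ} {a : ℝ} (h : IsLocalMax f a)
    {ι : Type*} {l : Filter ι} {M : ι → ℝ} (hM : Tendsto M l atTop) (R : ℝ) :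
    ∀ᶠ i in l, ∀ y : ℝ, |y| ≤ R * M i → M i ^ 2 * (f (a + y / M i ^ 2) - f a) ≤ 0 := by
  obtain ⟨ε, hε, hball⟩ := Metric.eventually_nhds_iff.1 h
  filter_upwards [hM.eventually_gt_atTop 0,
    (tendsto_const_nhds.div_atTop hM).eventually (eventually_lt_nhds hε)] with i hi hRε y hy
  have hclose : |y / M i ^ 2| < ε := by
    rw [abs_div, abs_of_pos (pow_pos hi 2), div_lt_iff₀ (pow_pos hi 2)]
    calc |y| ≤ R / M i * M i ^ 2 := by rwa [sq, ← mul_assoc, div_mul_cancel₀ _ hi.ne']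
      _ < ε * M i ^ 2 := mul_lt_mul_of_pos_right hRε (pow_pos hi 2)
  exact mul_nonpos_of_nonneg_of_nonpos (sq_nonneg _)
    (sub_nonpos.2 (hball (by rwa [Real.dist_eq, add_sub_cancel_left])))

theorem ContDiffOn.differentiableAt_deriv {f : ℝ → ℝ} {s : Set ℝ} {a : ℝ}
    (hf : ContDiffOn ℝ 2 f s) (hs : s ∈ 𝓝 a) : DifferentiableAt ℝ (deriv f) a := by
  obtain ⟨t, hts, ht, hat⟩ := mem_nhds_iff.1 hs
  exact (((hf.mono hts).deriv_of_isOpen (m := 1) ht (by norm_num)).differentiableOn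
    one_ne_zero).differentiableAt (ht.mem_nhds hat)

theorem tendsto_laplace_sum {f : ℝ → ℝ} {a R : ℝ} (hR : 0 ≤ R) (hmax : IsLocalMax f a)
    (hf : ∀ᶠ x in 𝓝 a, DifferentiableAt ℝ f x) (hf' : DifferentiableAt ℝ (deriv f) a)
    {ι : Type*} {l : Filter ι} [l.IsCountablyGenerated] {M : ι → ℝ} (hM : Tendsto M l atTop) :
    Tendsto (fun i => (∑ n ∈ Finset.Icc (-⌊R * M i⌋) ⌊R * M i⌋,
        Real.exp (M i ^ 2 * f (a + n / M i ^ 2))) / (M i * Real.exp (f a * M i ^ 2))) l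
      (𝓝 (∫ x in -R..R, Real.exp (deriv (deriv f) a * x ^ 2 / 2))) := by
  refine (tendsto_sum_Icc_floor_div hM hR (B := 1)
    (u := fun i n => Real.exp (M i ^ 2 * (f (a + n / M i ^ 2) - f a))) ?_ fun x _ => ?_).congr
    fun i => ?_
  · filter_upwards [hmax.eventually_sq_mul_sub_nonpos hM R] with i hi n hn
    rw [Real.norm_eq_abs, Real.abs_exp, Real.exp_le_one_iff]
    exact hi n hn
  · have h := tendsto_sq_mul_sub_of_deriv_eq_zero hf hf' hmax.deriv_eq_zero hM
      (tendsto_floor_mul_div hM x)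
    rw [← div_mul_eq_mul_div]
    refine ((Real.continuous_exp.tendsto _).comp h).congr fun i => ?_
    rw [Function.comp_apply, div_div, ← sq]
  · rw [div_mul_eq_div_div_swap, Finset.sum_div _ _ (Real.exp _)]
    congr 1
    refine Finset.sum_congr rfl fun n _ => ?_
    rw [← Real.exp_sub]
    ring_nf

theorem laplace_sum_concentration_general
    (a₁ a₂ astar R : ℝ) (hR : 0 < R)
    (f : ℝ → ℝ)
    (hf : ContDiffOn ℝ 2 f (Icc a₁ a₂))
    (hastar : astar ∈ Ioo a₁ a₂)
    (hmax : ∀ x ∈ Icc a₁ a₂, x ≠ astar → f x < f astar) :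
    Tendsto (fun L : ℕ =>
      (∑ n ∈ Finset.Icc (-(⌊R * (L : ℝ) ^ ((1:ℝ)/4)⌋)) ⌊R * (L : ℝ) ^ ((1:ℝ)/4)⌋,
        Real.exp (Real.sqrt L * f (astar + (n : ℝ) / Real.sqrt L))) /
      ((L : ℝ) ^ ((1:ℝ)/4) * Real.exp (f astar * Real.sqrt L) *
        ∫ x in (-R)..R, Real.exp (deriv (deriv f) astar * x ^ 2 / 2)))
      atTop (nhds 1) := by
  have hnhds : Icc a₁ a₂ ∈ 𝓝 astar := Icc_mem_nhds hastar.1 hastar.2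
  have hlocmax : IsLocalMax f astar := mem_of_superset hnhds fun x hx => show f x ≤ f astar from
    (eq_or_ne x astar).elim (fun h => h ▸ le_rfl) fun h => (hmax x hx h).le
  have hdiff : ∀ᶠ x in 𝓝 astar, DifferentiableAt ℝ f x :=
    ((hf.contDiffAt hnhds).eventually (by simp)).mono fun x hx => hx.differentiableAt two_ne_zero
  have hM : Tendsto (fun L : ℕ => (L : ℝ) ^ ((1 : ℝ) / 4)) atTop atTop :=
    (tendsto_rpow_atTop (by norm_num)).comp tendsto_natCast_atTop_atTop
  set I := ∫ x in (-R)..R, Real.exp (deriv (deriv f) astar * x ^ 2 / 2)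
  have hI : 0 < I := intervalIntegral.intervalIntegral_pos_of_pos
    (Continuous.intervalIntegrable (by fun_prop) _ _) (fun _ => Real.exp_pos _) (by linarith)
  have key := (tendsto_laplace_sum hR.le hlocmax hdiff (hf.differentiableAt_deriv hnhds)
    hM).div_const I
  rw [div_self hI.ne'] at key
  refine key.congr fun L => ?_
  have hsqrt : Real.sqrt L = ((L : ℝ) ^ ((1 : ℝ) / 4)) ^ 2 := by
    rw [← Real.rpow_natCast, ← Real.rpow_mul (Nat.cast_nonneg L), Real.sqrt_eq_rpow]
    norm_num
  rw [hsqrt, div_div]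

/-- Laplace-type concentration around the maximizer: for `f` C², strictly concave on
`[a₁,a₂]` with unique interior maximizer `a*` and `f''(a*) < 0`, and each fixed `R > 0`,
`Σ_{|n| ≤ R L^{1/4}} exp(√L f(a* + n/√L)) ~ L^{1/4} e^{f(a*)√L} ∫_{-R}^R e^{f''(a*)x²/2} dx`. -/
theorem laplace_sum_concentration
    (a₁ a₂ astar R : ℝ) (hR : 0 < R)
    (f : ℝ → ℝ)
    (hf : ContDiffOn ℝ 2 f (Icc a₁ a₂))
    (hconc : StrictConcaveOn ℝ (Icc a₁ a₂) f)
    (hastar : astar ∈ Ioo a₁ a₂)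
    (hmax : ∀ x ∈ Icc a₁ a₂, x ≠ astar → f x < f astar)
    (hf'' : deriv (deriv f) astar < 0) :
    Tendsto (fun L : ℕ =>
      (∑ n ∈ Finset.Icc (-(⌊R * (L : ℝ) ^ ((1:ℝ)/4)⌋)) ⌊R * (L : ℝ) ^ ((1:ℝ)/4)⌋,
        Real.exp (Real.sqrt L * f (astar + (n : ℝ) / Real.sqrt L))) /
      ((L : ℝ) ^ ((1:ℝ)/4) * Real.exp (f astar * Real.sqrt L) *
        ∫ x in (-R)..R, Real.exp (deriv (deriv f) astar * x ^ 2 / 2)))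
      atTop (nhds 1) :=
  laplace_sum_concentration_general a₁ a₂ astar R hR f hf hastar hmax
end
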